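/- Assume (A1) and (A2'). Suppose (ρ, W) with ρ ≥ 0, W : S → (0,∞) and W ∈ 𝔬(𝒱) satisfies W(i) = min_{u∈𝕌(i)} [ e^{c(i,u) − ρ} Σ_{j∈S} W(j) P(j|i,u) ] for all i ∈ S, and that ρ ≥ λ*. Then ρ = λ* and W is a scalar multiple of ψ*, the unique positive solution with ψ*(i₀) = 1 of e^{λ*} ψ*(i) = min_{u∈𝕌(i)} [ e^{c(i,u)} Σ_{j∈S} ψ*(j) P(j|i,u) ]. -/

import Mathlib

/-!
Discrete-time controlled Markov chains on the countable state space `S = ℕ`,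
with Borel action space `U`, admissible action sets `𝕌 i ⊆ U`, controlled
transition probabilities `P i u j = P(j | i, u)` (valued in `ℝ≥0∞`) and running
cost `c i u = c(i,u)`.

Since admissible policies are deterministic measurable functions of the
history, and the actions appearing in a history are themselves determined by
the past states, an admissible policy is faithfully represented by a family of
maps of state-prefixes `ζ t : (Fin (t+1) → ℕ) → U`; measurability in the
history is automatic because state prefixes form a countable discrete space.
The trajectory law `P_i^ζ` is uniquely determined by its cylinder
probabilities, which are given explicitly by `pathWeight`; accordingly,
expectations of path functionals are given by explicit (countable) sums.
-/

open Filter Set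
open scoped ENNReal NNReal Topology Classical

namespace RSDT

variable {U : Type*}

/-- The action chosen at time `t` under policy `ζ` along the state path `x`. -/
def act (ζ : ∀ t : ℕ, (Fin (t + 1) → ℕ) → U) (x : ℕ → ℕ) (t : ℕ) : U :=
  ζ t fun s : Fin (t + 1) => x s.val

/-- Admissibility of a policy: all chosen actions lie in the admissible sets. -/
def IsAdmissible (𝕌 : ℕ → Set U) (ζ : ∀ t : ℕ, (Fin (t + 1) → ℕ) → U) : Prop :=
  ∀ (t : ℕ) (h : Fin (t + 1) → ℕ), ζ t h ∈ 𝕌 (h (Fin.last t))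

/-- The stationary Markov policy attached to `v : S → U`. -/
def smPolicy (v : ℕ → U) : ∀ t : ℕ, (Fin (t + 1) → ℕ) → U :=
  fun t h => v (h (Fin.last t))

/-- The (time-dependent) Markov policy attached to `v : ℕ → S → U`. -/
def mPolicy (v : ℕ → ℕ → U) : ∀ t : ℕ, (Fin (t + 1) → ℕ) → U :=
  fun t h => v t (h (Fin.last t))

/-- `v : S → U` is a stationary Markov selector for the action sets `𝕌`. -/
def IsSM (𝕌 : ℕ → Set U) (v : ℕ → U) : Prop := ∀ i, v i ∈ 𝕌 i

/-- Probability, under the trajectory law `P_i^ζ`, that the chain follows the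
path `x` during its first `T` steps. -/
noncomputable def pathWeight (P : ℕ → U → ℕ → ℝ≥0∞)
    (ζ : ∀ t : ℕ, (Fin (t + 1) → ℕ) → U) (i T : ℕ) (x : ℕ → ℕ) : ℝ≥0∞ :=
  (if x 0 = i then 1 else 0) * ∏ t ∈ Finset.range T, P (x t) (act ζ x t) (x (t + 1))

/-- Extension of a finite path to an infinite one (freezing the last state). -/
def extN (T : ℕ) (x : Fin (T + 1) → ℕ) : ℕ → ℕ :=
  fun n => x ⟨min n T, Nat.lt_succ_of_le (min_le_right n T)⟩

/-- `E_i^ζ [F(X_0, …, X_T)]` for a nonnegative functional `F` of the first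
`T + 1` states. -/
noncomputable def pathExp (P : ℕ → U → ℕ → ℝ≥0∞)
    (ζ : ∀ t : ℕ, (Fin (t + 1) → ℕ) → U) (i T : ℕ) (F : (ℕ → ℕ) → ℝ≥0∞) : ℝ≥0∞ :=
  ∑' x : Fin (T + 1) → ℕ, pathWeight P ζ i T (extN T x) * F (extN T x)

/-- The ergodic risk-sensitive cost
`𝓔_i(c,ζ) = limsup_{T→∞} (1/T) log E_i^ζ [exp (∑_{t<T} c(X_t, ζ_t))]`. -/
noncomputable def ergCost (P : ℕ → U → ℕ → ℝ≥0∞) (c : ℕ → U → ℝ)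
    (ζ : ∀ t : ℕ, (Fin (t + 1) → ℕ) → U) (i : ℕ) : EReal :=
  Filter.limsup
    (fun T : ℕ => (((T : ℝ)⁻¹ : ℝ) : EReal) *
      ENNReal.log (pathExp P ζ i T fun x =>
        ENNReal.ofReal (Real.exp (∑ t ∈ Finset.range T, c (x t) (act ζ x t)))))
    Filter.atTop

/-- The optimal value `λ* = inf_{i ∈ S} inf_{ζ ∈ 𝔘} 𝓔_i(c,ζ)`. -/
noncomputable def lamStar (P : ℕ → U → ℕ → ℝ≥0∞) (c : ℕ → U → ℝ) (𝕌 : ℕ → Set U) : EReal :=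
  ⨅ (i : ℕ) (ζ : {ζ : ∀ t : ℕ, (Fin (t + 1) → ℕ) → U // IsAdmissible 𝕌 ζ}),
    ergCost P c ζ.1 i

/-- `E_i^ζ [ G(τ̆(B), X) ; τ̆(B) < ∞ ]`, where `τ̆(B) = inf {t > 0 : X_t ∈ B}`
is the first hitting time of `B`. -/
noncomputable def hitExp (P : ℕ → U → ℕ → ℝ≥0∞)
    (ζ : ∀ t : ℕ, (Fin (t + 1) → ℕ) → U) (i : ℕ) (B : Set ℕ)
    (G : ℕ → (ℕ → ℕ) → ℝ≥0∞) : ℝ≥0∞ :=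
  ∑' (m : ℕ) (x : Fin (m + 1 + 1) → ℕ),
    if extN (m + 1) x (m + 1) ∈ B ∧ ∀ t, 0 < t → t < m + 1 → extN (m + 1) x t ∉ B then
      pathWeight P ζ i (m + 1) (extN (m + 1) x) * G (m + 1) (extN (m + 1) x)
    else 0

/-- `P_i^ζ (τ̆(B) < ∞)`. -/
noncomputable def hitProb (P : ℕ → U → ℕ → ℝ≥0∞)
    (ζ : ∀ t : ℕ, (Fin (t + 1) → ℕ) → U) (i : ℕ) (B : Set ℕ) : ℝ≥0∞ :=
  hitExp P ζ i B fun _ _ => 1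

/-- Recurrence under a stationary Markov policy: from every state, every state
is hit with probability one. -/
def Recurrent (P : ℕ → U → ℕ → ℝ≥0∞) (v : ℕ → U) : Prop :=
  ∀ i j : ℕ, hitProb P (smPolicy v) i {j} = 1

/-- Irreducibility under a stationary Markov policy. -/
def Irreducible (P : ℕ → U → ℕ → ℝ≥0∞) (v : ℕ → U) : Prop :=
  ∀ i j : ℕ, i ≠ j → ∃ n : ℕ, 0 < n ∧ ∃ x : ℕ → ℕ, x 0 = i ∧ x n = j ∧
    ∀ t < n, 0 < P (x t) (v (x t)) (x (t + 1))

/-- A function on the state space is norm-like (inf-compact) if all its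
sublevel sets are finite (or empty). -/
def NormLike (g : ℕ → ℝ) : Prop := ∀ κ : ℝ, {i | g i ≤ κ}.Finite

/-- `max_{u ∈ 𝕌(i)} c(i, u)`. -/
noncomputable def maxCost (c : ℕ → U → ℝ) (𝕌 : ℕ → Set U) (i : ℕ) : ℝ :=
  sSup ((fun u => c i u) '' 𝕌 i)

/-- `‖c‖_∞ = sup_{i ∈ S} sup_{u ∈ 𝕌(i)} c(i,u)`. -/
noncomputable def supCost (c : ℕ → U → ℝ) (𝕌 : ℕ → Set U) : ℝ :=
  sSup {r : ℝ | ∃ i, ∃ u ∈ 𝕌 i, c i u = r}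

/-- The one-step minimized operator
`ψ ↦ min_{u ∈ 𝕌(i)} e^{c(i,u)} ∑_{j ∈ S} ψ(j) P(j|i,u)`. -/
noncomputable def minOp (P : ℕ → U → ℕ → ℝ≥0∞) (c : ℕ → U → ℝ)
    (𝕌 : ℕ → Set U) (ψ : ℕ → ℝ≥0∞) (i : ℕ) : ℝ≥0∞ :=
  ⨅ u : 𝕌 i, ENNReal.ofReal (Real.exp (c i u.1)) * ∑' j, ψ j * P i u.1 j

/-- Structural standing assumptions on the discrete-time control model. -/
structure Model [TopologicalSpace U] [MeasurableSpace U]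
    (P : ℕ → U → ℕ → ℝ≥0∞) (c : ℕ → U → ℝ) (𝕌 : ℕ → Set U) : Prop where
  nonempty : ∀ i, (𝕌 i).Nonempty
  compact : ∀ i, IsCompact (𝕌 i)
  prob : ∀ i, ∀ u ∈ 𝕌 i, ∑' j, P i u j = 1
  measP : ∀ i j, Measurable fun u => P i u j

/-- Assumption (A1)(a): continuity in the action variable. -/
structure A1a [TopologicalSpace U] (P : ℕ → U → ℕ → ℝ≥0∞) (c : ℕ → U → ℝ)
    (𝕌 : ℕ → Set U) : Prop where
  cCont : ∀ i, ContinuousOn (fun u => c i u) (𝕌 i)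
  PCont : ∀ (i : ℕ) (f : ℕ → ℝ), (∃ M, ∀ j, |f j| ≤ M) →
    ContinuousOn (fun u => ∑' j, f j * (P i u j).toReal) (𝕌 i)

/-- Assumption (A1)(b): from the reference state `i₀` every other state is
reached in one step with positive probability. -/
def A1b (P : ℕ → U → ℕ → ℝ≥0∞) (𝕌 : ℕ → Set U) (i₀ : ℕ) : Prop :=
  ∀ j ≠ i₀, ∀ u ∈ 𝕌 i₀, 0 < P i₀ u j

/-- Foster–Lyapunov condition (A2)(a). -/
structure A2a (P : ℕ → U → ℕ → ℝ≥0∞) (c : ℕ → U → ℝ) (𝕌 : ℕ → Set U)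
    (V : ℕ → ℝ≥0∞) (K : Finset ℕ) (Chat : ℝ≥0∞) (β : ℝ) : Prop where
  betaPos : 0 < β
  betaLtOne : β < 1
  ChatPos : 0 < Chat
  ChatFin : Chat ≠ ∞
  Vone : ∀ i, 1 ≤ V i
  Vfin : ∀ i, V i ≠ ∞
  lyap : ∀ i, ∀ u ∈ 𝕌 i,
    ∑' j, V j * P i u j ≤ ENNReal.ofReal (1 - β) * V i + (if i ∈ K then Chat else 0)
  cBdd : ∃ M : ℝ, M < Real.log (1 / (1 - β)) ∧ ∀ i, ∀ u ∈ 𝕌 i, c i u ≤ M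

/-- Foster–Lyapunov condition (A2)(b). -/
structure A2b (P : ℕ → U → ℕ → ℝ≥0∞) (c : ℕ → U → ℝ) (𝕌 : ℕ → Set U)
    (V : ℕ → ℝ≥0∞) (K : Finset ℕ) (Chat : ℝ≥0∞) (ℓ : ℕ → ℝ) : Prop where
  ChatPos : 0 < Chat
  ChatFin : Chat ≠ ∞
  Vone : ∀ i, 1 ≤ V i
  Vfin : ∀ i, V i ≠ ∞
  ellNonneg : ∀ i, 0 ≤ ℓ i
  ellNormLike : NormLike ℓ
  lyap : ∀ i, ∀ u ∈ 𝕌 i,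
    ∑' j, V j * P i u j ≤ (if i ∈ K then Chat else 0) + ENNReal.ofReal (Real.exp (-ℓ i)) * V i
  gap : NormLike fun i => ℓ i - maxCost c 𝕌 i

/-- Assumption (A2): irreducibility under every stationary Markov policy plus
one of the two Foster–Lyapunov drift conditions. -/
def A2 (P : ℕ → U → ℕ → ℝ≥0∞) (c : ℕ → U → ℝ) (𝕌 : ℕ → Set U) : Prop :=
  (∀ v : ℕ → U, IsSM 𝕌 v → Irreducible P v) ∧
  ∃ (V : ℕ → ℝ≥0∞) (K : Finset ℕ) (Chat : ℝ≥0∞),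
    (∃ β : ℝ, A2a P c 𝕌 V K Chat β) ∨ ∃ ℓ : ℕ → ℝ, A2b P c 𝕌 V K Chat ℓ

end RSDT

namespace RSDT
variable {U : Type*}

/-- expectation of `e^{∑ c}·g(X_T)` -/
noncomputable def Ex (P : ℕ → U → ℕ → ℝ≥0∞) (c : ℕ → U → ℝ)
    (ζ : ∀ t : ℕ, (Fin (t + 1) → ℕ) → U) (i : ℕ) (T : ℕ) (g : ℕ → ℝ≥0∞) : ℝ≥0∞ :=
  pathExp P ζ i T (fun x => ENNReal.ofReal (Real.exp (∑ t ∈ Finset.range T, c (x t) (act ζ x t))) * g (x T))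

section facts
variable {T : ℕ} (y : Fin (T + 1) → ℕ) (j : ℕ)

lemma extN_snoc_of_le {n : ℕ} (hn : n ≤ T) :
    extN (T + 1) (Fin.snoc y j) n = extN T y n := by
  unfold extN
  have h1 : min n (T + 1) = n := by omega
  have h2 : min n T = n := by omega
  have : (⟨min n (T+1), Nat.lt_succ_of_le (min_le_right n (T+1))⟩ : Fin (T+2))
      = Fin.castSucc ⟨min n T, Nat.lt_succ_of_le (min_le_right n T)⟩ := by
    simp [Fin.ext_iff, h1, h2]
  rw [this, Fin.snoc_castSucc]

lemma extN_snoc_last : extN (T + 1) (Fin.snoc y j) (T + 1) = j := by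
  unfold extN
  have : (⟨min (T+1) (T+1), Nat.lt_succ_of_le (min_le_right (T+1) (T+1))⟩ : Fin (T+2))
      = Fin.last (T+1) := by simp [Fin.ext_iff]
  rw [this, Fin.snoc_last]

lemma extN_self : extN T y T = y (Fin.last T) := by
  unfold extN; congr 1; simp [Fin.ext_iff]

lemma act_extN_snoc {t : ℕ} (ht : t ≤ T) (ζ : ∀ t : ℕ, (Fin (t + 1) → ℕ) → U) :
    act ζ (extN (T + 1) (Fin.snoc y j)) t = act ζ (extN T y) t := by
  unfold act; congr 1; funext s
  exact extN_snoc_of_le y j (le_trans (Nat.lt_succ_iff.mp s.isLt) ht)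

lemma act_extN_top (ζ : ∀ t : ℕ, (Fin (t + 1) → ℕ) → U) :
    act ζ (extN T y) T = ζ T y := by
  unfold act; congr 1; funext s
  unfold extN
  congr 1
  simp [Fin.ext_iff, Nat.lt_succ_iff.mp s.isLt]
end facts

/-- one-step tower property -/
lemma Ex_succ (P : ℕ → U → ℕ → ℝ≥0∞) (c : ℕ → U → ℝ)
    (ζ : ∀ t : ℕ, (Fin (t + 1) → ℕ) → U) (i : ℕ) (T : ℕ) (g : ℕ → ℝ≥0∞) :
    Ex P c ζ i (T + 1) g = ∑' y : Fin (T + 1) → ℕ,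
      (pathWeight P ζ i T (extN T y) *
        ENNReal.ofReal (Real.exp (∑ t ∈ Finset.range T, c (extN T y t) (act ζ (extN T y) t)))) *
      (ENNReal.ofReal (Real.exp (c (y (Fin.last T)) (ζ T y))) *
        ∑' j, g j * P (y (Fin.last T)) (ζ T y) j) := by
  classical
  unfold Ex pathExp
  rw [← Equiv.tsum_eq (Fin.insertNthEquiv (fun _ : Fin (T+2) => ℕ) (Fin.last (T+1)))]
  rw [ENNReal.tsum_prod']
  rw [ENNReal.tsum_comm]
  congr 1; funext y
  have hsymm : ∀ j : ℕ, (Fin.insertNthEquiv (fun _ : Fin (T+2) => ℕ) (Fin.last (T+1))) (j, y)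
      = Fin.snoc y j := by
    intro j
    simp only [Fin.insertNthEquiv, Equiv.coe_fn_mk]
    simp [Fin.insertNth_last]
  -- rewrite each summand
  have key : ∀ j : ℕ,
      pathWeight P ζ i (T+1) (extN (T+1) (Fin.snoc y j)) *
        (ENNReal.ofReal (Real.exp (∑ t ∈ Finset.range (T+1),
            c (extN (T+1) (Fin.snoc y j) t) (act ζ (extN (T+1) (Fin.snoc y j)) t))) *
          g (extN (T+1) (Fin.snoc y j) (T+1))) =
      ((pathWeight P ζ i T (extN T y) *
        ENNReal.ofReal (Real.exp (∑ t ∈ Finset.range T, c (extN T y t) (act ζ (extN T y) t)))) *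
       (ENNReal.ofReal (Real.exp (c (y (Fin.last T)) (ζ T y))))) *
      (g j * P (y (Fin.last T)) (ζ T y) j) := by
    intro j
    have hw : pathWeight P ζ i (T+1) (extN (T+1) (Fin.snoc y j)) =
        pathWeight P ζ i T (extN T y) * P (y (Fin.last T)) (ζ T y) j := by
      unfold pathWeight
      rw [Finset.prod_range_succ]
      have h0 : extN (T+1) (Fin.snoc y j) 0 = extN T y 0 := extN_snoc_of_le y j (Nat.zero_le T)
      have hprod : ∏ t ∈ Finset.range T,
          P (extN (T+1) (Fin.snoc y j) t) (act ζ (extN (T+1) (Fin.snoc y j)) t)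
            (extN (T+1) (Fin.snoc y j) (t+1)) =
          ∏ t ∈ Finset.range T, P (extN T y t) (act ζ (extN T y) t) (extN T y (t+1)) := by
        apply Finset.prod_congr rfl
        intro t ht
        have ht' : t < T := Finset.mem_range.mp ht
        rw [extN_snoc_of_le y j (le_of_lt ht'), act_extN_snoc y j (le_of_lt ht'),
          extN_snoc_of_le y j (by omega)]
      have hlastP : P (extN (T+1) (Fin.snoc y j) T) (act ζ (extN (T+1) (Fin.snoc y j)) T)
          (extN (T+1) (Fin.snoc y j) (T+1)) = P (y (Fin.last T)) (ζ T y) j := by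
        rw [extN_snoc_of_le y j le_rfl, act_extN_snoc y j le_rfl, extN_snoc_last, extN_self,
          act_extN_top]
      rw [h0, hprod, hlastP]; ring
    have hsum : (∑ t ∈ Finset.range (T+1),
        c (extN (T+1) (Fin.snoc y j) t) (act ζ (extN (T+1) (Fin.snoc y j)) t)) =
        (∑ t ∈ Finset.range T, c (extN T y t) (act ζ (extN T y) t)) +
          c (y (Fin.last T)) (ζ T y) := by
      rw [Finset.sum_range_succ]
      congr 1
      · apply Finset.sum_congr rfl
        intro t ht
        have ht' : t < T := Finset.mem_range.mp ht
        rw [extN_snoc_of_le y j (le_of_lt ht'), act_extN_snoc y j (le_of_lt ht')]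
      · rw [extN_snoc_of_le y j le_rfl, act_extN_snoc y j le_rfl, extN_self, act_extN_top]
    have hg : extN (T+1) (Fin.snoc y j) (T+1) = j := extN_snoc_last y j
    rw [hw, hsum, hg, Real.exp_add, ENNReal.ofReal_mul (le_of_lt (Real.exp_pos _))]
    ring
  calc ∑' j : ℕ, (fun x : Fin (T+2) → ℕ => pathWeight P ζ i (T+1) (extN (T+1) x) *
          (ENNReal.ofReal (Real.exp (∑ t ∈ Finset.range (T+1),
            c (extN (T+1) x t) (act ζ (extN (T+1) x) t))) * g (extN (T+1) x (T+1))))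
          ((Fin.insertNthEquiv (fun _ : Fin (T+2) => ℕ) (Fin.last (T+1))) (j, y))
      = ∑' j : ℕ, ((pathWeight P ζ i T (extN T y) *
          ENNReal.ofReal (Real.exp (∑ t ∈ Finset.range T, c (extN T y t) (act ζ (extN T y) t)))) *
          (ENNReal.ofReal (Real.exp (c (y (Fin.last T)) (ζ T y))))) *
          (g j * P (y (Fin.last T)) (ζ T y) j) := by
        congr 1; funext j; rw [hsymm j]; exact key j
    _ = _ := by
        rw [ENNReal.tsum_mul_left]; ring

section ExLemmas
variable (P : ℕ → U → ℕ → ℝ≥0∞) (c : ℕ → U → ℝ) (ζ : ∀ t : ℕ, (Fin (t + 1) → ℕ) → U) (i : ℕ)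

lemma Ex_apply (T : ℕ) (g : ℕ → ℝ≥0∞) :
    Ex P c ζ i T g = ∑' y : Fin (T + 1) → ℕ,
      (pathWeight P ζ i T (extN T y) *
        ENNReal.ofReal (Real.exp (∑ t ∈ Finset.range T, c (extN T y t) (act ζ (extN T y) t)))) *
      g (y (Fin.last T)) := by
  unfold Ex pathExp
  congr 1; funext y
  dsimp only
  rw [extN_self]
  ring

lemma Ex_zero (g : ℕ → ℝ≥0∞) : Ex P c ζ i 0 g = g i := by
  rw [Ex_apply]
  simp only [Finset.range_zero, Finset.sum_empty, Real.exp_zero, ENNReal.ofReal_one, mul_one]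
  unfold pathWeight
  simp only [Finset.range_zero, Finset.prod_empty, mul_one]
  rw [← Equiv.tsum_eq (Equiv.funUnique (Fin 1) ℕ).symm]
  have h1 : ∀ n : ℕ, extN 0 ((Equiv.funUnique (Fin 1) ℕ).symm n) 0 = n := fun n => rfl
  have h2 : ∀ n : ℕ, ((Equiv.funUnique (Fin 1) ℕ).symm n) (Fin.last 0) = n := fun n => rfl
  simp only [h1, h2]
  rw [tsum_eq_single i (by intro b hb; simp [hb])]
  simp

lemma Ex_mono_g {g g' : ℕ → ℝ≥0∞} (h : ∀ j, g j ≤ g' j) (T : ℕ) :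
    Ex P c ζ i T g ≤ Ex P c ζ i T g' := by
  rw [Ex_apply, Ex_apply]
  exact ENNReal.tsum_le_tsum fun y => mul_le_mul_right (h _) _

lemma Ex_smul (a : ℝ≥0∞) (g : ℕ → ℝ≥0∞) (T : ℕ) :
    Ex P c ζ i T (fun j => a * g j) = a * Ex P c ζ i T g := by
  rw [Ex_apply, Ex_apply, ← ENNReal.tsum_mul_left]
  congr 1; funext y; ring

lemma Ex_add (g g' : ℕ → ℝ≥0∞) (T : ℕ) :
    Ex P c ζ i T (fun j => g j + g' j) = Ex P c ζ i T g + Ex P c ζ i T g' := by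
  rw [Ex_apply, Ex_apply, Ex_apply, ← ENNReal.tsum_add]
  congr 1; funext y; ring

variable {𝕌 : ℕ → Set U}

lemma Ex_succ_le (hadm : IsAdmissible 𝕌 ζ) {g h : ℕ → ℝ≥0∞}
    (hineq : ∀ s, ∀ u ∈ 𝕌 s, ENNReal.ofReal (Real.exp (c s u)) * ∑' j, g j * P s u j ≤ h s)
    (T : ℕ) : Ex P c ζ i (T + 1) g ≤ Ex P c ζ i T h := by
  rw [Ex_succ, Ex_apply]
  exact ENNReal.tsum_le_tsum fun y => mul_le_mul_right (hineq _ _ (hadm T y)) _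

lemma Ex_succ_ge (hadm : IsAdmissible 𝕌 ζ) {g h : ℕ → ℝ≥0∞}
    (hineq : ∀ s, ∀ u ∈ 𝕌 s, h s ≤ ENNReal.ofReal (Real.exp (c s u)) * ∑' j, g j * P s u j)
    (T : ℕ) : Ex P c ζ i T h ≤ Ex P c ζ i (T + 1) g := by
  rw [Ex_succ, Ex_apply]
  exact ENNReal.tsum_le_tsum fun y => mul_le_mul_right (hineq _ _ (hadm T y)) _

end ExLemmas

section Master
variable [TopologicalSpace U] [MeasurableSpace U]
  {P : ℕ → U → ℕ → ℝ≥0∞} {c : ℕ → U → ℝ} {𝕌 : ℕ → Set U}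

/-- Key quantitative lemma: any admissible policy has risk-sensitive ergodic cost at
least `ρ`, given a supersolution `W ≤ C₃ V` of the eigen-inequality and a
multiplicative Foster–Lyapunov drift bound for `V`. -/
lemma rho_le_ergCost (hM : Model P c 𝕌) (hc : ∀ s, ∀ u ∈ 𝕌 s, 0 ≤ c s u)
    {V W : ℕ → ℝ≥0∞} {ρ : ℝ}
    (hVfin : ∀ j, V j ≠ ∞)
    {Cd : ℝ≥0∞} (hCd : Cd ≠ ∞)
    (hdr : ∀ s, ∀ u ∈ 𝕌 s, ENNReal.ofReal (Real.exp (c s u)) * ∑' j, V j * P s u j ≤ V s + Cd)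
    {C₃ : ℝ≥0∞} (hC₃ : C₃ ≠ ∞) (hWbd : ∀ j, W j ≤ C₃ * V j)
    (hsup : ∀ s, ∀ u ∈ 𝕌 s, ENNReal.ofReal (Real.exp ρ) * W s ≤
      ENNReal.ofReal (Real.exp (c s u)) * ∑' j, W j * P s u j)
    {ζ : ∀ t : ℕ, (Fin (t + 1) → ℕ) → U} (hadm : IsAdmissible 𝕌 ζ)
    (i : ℕ) (hWpos : 0 < W i) (hWfin : W i ≠ ∞) :
    (ρ : EReal) ≤ ergCost P c ζ i := by
  classical
  set F : ℕ → ℝ≥0∞ := fun T => Ex P c ζ i T (fun _ => 1) with hF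
  set G : ℕ → ℝ≥0∞ := fun T => Ex P c ζ i T V with hG
  set H : ℕ → ℝ≥0∞ := fun T => Ex P c ζ i T W with hH
  -- basic facts about F
  have hstep1 : ∀ T, F T ≤ F (T + 1) := by
    intro T
    apply Ex_succ_ge P c ζ i hadm (h := fun _ => 1)
    intro s u hu
    have h1 : (∑' j, (1 : ℝ≥0∞) * P s u j) = 1 := by
      simp only [one_mul]; exact hM.prob s u hu
    rw [h1, mul_one]
    rw [show (1 : ℝ≥0∞) = ENNReal.ofReal (Real.exp 0) by simp]
    exact ENNReal.ofReal_le_ofReal (Real.exp_le_exp.mpr (hc s u hu))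
  have hFmono : Monotone F := monotone_nat_of_le_succ hstep1
  have hF0 : F 0 = 1 := Ex_zero P c ζ i _
  have hF1 : ∀ T, 1 ≤ F T := fun T => hF0 ▸ hFmono (Nat.zero_le T)
  -- supersolution iteration
  have hHlow : ∀ T, (ENNReal.ofReal (Real.exp ρ)) ^ T * W i ≤ H T := by
    intro T
    induction T with
    | zero => simp [hH, Ex_zero]
    | succ T ih =>
      have key : Ex P c ζ i T (fun s => ENNReal.ofReal (Real.exp ρ) * W s) ≤ H (T + 1) :=
        Ex_succ_ge P c ζ i hadm (g := W) (h := fun s => ENNReal.ofReal (Real.exp ρ) * W s)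
          hsup T
      rw [Ex_smul] at key
      calc (ENNReal.ofReal (Real.exp ρ)) ^ (T + 1) * W i
          = ENNReal.ofReal (Real.exp ρ) * ((ENNReal.ofReal (Real.exp ρ)) ^ T * W i) := by ring
        _ ≤ ENNReal.ofReal (Real.exp ρ) * H T := mul_le_mul_right ih _
        _ ≤ H (T + 1) := key
  -- drift iteration
  have hGstep : ∀ T, G (T + 1) ≤ G T + Cd * F T := by
    intro T
    have key : G (T + 1) ≤ Ex P c ζ i T (fun s => V s + Cd) :=
      Ex_succ_le P c ζ i hadm hdr T
    calc G (T + 1) ≤ Ex P c ζ i T (fun s => V s + Cd * 1) := by simpa using key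
      _ = G T + Cd * F T := by
          rw [show (fun s : ℕ => V s + Cd * (1:ℝ≥0∞)) = fun s => V s + (fun _ : ℕ => Cd * 1) s from rfl,
            Ex_add, Ex_smul]
  have hGbd : ∀ T, G T ≤ V i + Cd * ∑ k ∈ Finset.range T, F k := by
    intro T
    induction T with
    | zero => simp [hG, Ex_zero]
    | succ T ih =>
      calc G (T + 1) ≤ G T + Cd * F T := hGstep T
        _ ≤ (V i + Cd * ∑ k ∈ Finset.range T, F k) + Cd * F T := add_le_add_left ih _
        _ = V i + Cd * ∑ k ∈ Finset.range (T + 1), F k := by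
            rw [Finset.sum_range_succ, mul_add, add_assoc]
  have hHup : ∀ T, H T ≤ C₃ * G T := by
    intro T
    calc H T ≤ Ex P c ζ i T (fun j => C₃ * V j) := Ex_mono_g P c ζ i hWbd T
      _ = C₃ * G T := Ex_smul P c ζ i C₃ V T
  -- identify ergCost with F
  have hFrepr : ∀ T, (pathExp P ζ i T fun x =>
      ENNReal.ofReal (Real.exp (∑ t ∈ Finset.range T, c (x t) (act ζ x t)))) = F T := by
    intro T
    rw [hF]
    unfold Ex pathExp
    congr 1; funext x
    dsimp only
    rw [mul_one]
  have herg : ergCost P c ζ i =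
      Filter.limsup (fun T : ℕ => (((T : ℝ)⁻¹ : ℝ) : EReal) * ENNReal.log (F T)) Filter.atTop := by
    unfold ergCost
    congr 1
    funext T
    rw [hFrepr]
  by_contra hlt'
  have hlt : ergCost P c ζ i < (ρ : EReal) := not_le.mp hlt'
  -- nonnegativity of the cost
  have h0le : (0 : EReal) ≤ ergCost P c ζ i := by
    rw [herg]
    have hfreq : ∃ᶠ T : ℕ in Filter.atTop,
        (0 : EReal) ≤ (((T : ℝ)⁻¹ : ℝ) : EReal) * ENNReal.log (F T) := by
      apply Filter.Eventually.frequently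
      filter_upwards with T
      apply mul_nonneg
      · exact_mod_cast inv_nonneg.mpr (Nat.cast_nonneg T)
      · have := ENNReal.log_monotone (hF1 T)
        simpa using this
    exact Filter.le_limsup_of_frequently_le hfreq
  obtain ⟨x, hx1, hx2⟩ := exists_between hlt
  have hxbot : x ≠ ⊥ := ne_bot_of_gt (lt_of_le_of_lt h0le hx1)
  have hxtop : x ≠ ⊤ := (hx2.trans (EReal.coe_lt_top ρ)).ne
  set ρ' := x.toReal with hρ'def
  have hxx : (ρ' : EReal) = x := EReal.coe_toReal hxtop hxbot
  have hρ'0 : 0 ≤ ρ' := by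
    have h0x : (0 : EReal) ≤ x := le_of_lt (lt_of_le_of_lt h0le hx1)
    rw [← hxx] at h0x
    exact_mod_cast h0x
  have hρ'ρ : ρ' < ρ := by rw [← EReal.coe_lt_coe_iff, hxx]; exact hx2
  have hx1' : Filter.limsup (fun T : ℕ => (((T : ℝ)⁻¹ : ℝ) : EReal) * ENNReal.log (F T))
      Filter.atTop < x := by rw [← herg]; exact hx1
  have hev := Filter.eventually_lt_of_limsup_lt hx1'
  obtain ⟨T₀', hT₀'⟩ := Filter.eventually_atTop.mp hev
  set T₀ := max T₀' 1 with hT₀def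
  have hFle : ∀ T, T₀ ≤ T → F T ≤ ENNReal.ofReal (Real.exp (ρ' * T)) := by
    intro T hT
    have hT1 : 1 ≤ T := le_trans (le_max_right _ _) hT
    have hTpos : (0 : ℝ) < T := by exact_mod_cast hT1
    have haT := hT₀' T (le_trans (le_max_left _ _) hT)
    have hFne : F T ≠ 0 := by
      intro h
      have h1 := hF1 T
      rw [h] at h1
      exact absurd h1 (by simp)
    by_cases htop : F T = ⊤
    · exfalso
      rw [htop, ENNReal.log_top, EReal.coe_mul_top_of_pos (inv_pos.mpr hTpos)] at haT
      exact not_top_lt haT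
    · set l := (ENNReal.log (F T)).toReal with hl
      have hlogne1 : ENNReal.log (F T) ≠ ⊤ := by simp [ENNReal.log_eq_top_iff, htop]
      have hlogne2 : ENNReal.log (F T) ≠ ⊥ := by simp [ENNReal.log_eq_bot_iff, hFne]
      have hlog : ENNReal.log (F T) = (l : EReal) := (EReal.coe_toReal hlogne1 hlogne2).symm
      rw [hlog, ← EReal.coe_mul, ← hxx] at haT
      have haT' : (T : ℝ)⁻¹ * l < ρ' := EReal.coe_lt_coe_iff.mp haT
      have hlle : l ≤ ρ' * T := by
        rw [inv_mul_lt_iff₀ hTpos] at haT'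
        nlinarith
      have hexp : F T = ENNReal.ofReal (Real.exp l) := by
        have := ENNReal.exp_log (F T)
        rw [hlog] at this
        rw [← this, EReal.exp_coe]
      rw [hexp]
      exact ENNReal.ofReal_le_ofReal (Real.exp_le_exp.mpr hlle)
  set Bf := ENNReal.ofReal (Real.exp (ρ' * T₀)) with hBfdef
  have hBf1 : 1 ≤ Bf := by
    rw [hBfdef, show (1:ℝ≥0∞) = ENNReal.ofReal (Real.exp 0) by simp]
    exact ENNReal.ofReal_le_ofReal (Real.exp_le_exp.mpr (by positivity))
  have hE1 : ∀ T : ℕ, 1 ≤ ENNReal.ofReal (Real.exp (ρ' * T)) := by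
    intro T
    rw [show (1:ℝ≥0∞) = ENNReal.ofReal (Real.exp 0) by simp]
    exact ENNReal.ofReal_le_ofReal (Real.exp_le_exp.mpr (by positivity))
  have hFbd : ∀ T : ℕ, F T ≤ Bf * ENNReal.ofReal (Real.exp (ρ' * T)) := by
    intro T
    rcases le_total T T₀ with h | h
    · calc F T ≤ F T₀ := hFmono h
        _ ≤ Bf := hFle T₀ le_rfl
        _ = Bf * 1 := (mul_one _).symm
        _ ≤ Bf * ENNReal.ofReal (Real.exp (ρ' * T)) := mul_le_mul_right (hE1 T) _
    · calc F T ≤ ENNReal.ofReal (Real.exp (ρ' * T)) := hFle T h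
        _ ≤ Bf * ENNReal.ofReal (Real.exp (ρ' * T)) := le_mul_of_one_le_left' hBf1
  -- combine all bounds
  have hmain : ∀ T : ℕ, (ENNReal.ofReal (Real.exp ρ)) ^ T * W i ≤
      (C₃ * (V i + Cd * Bf)) * ((T : ℝ≥0∞) + 1) * ENNReal.ofReal (Real.exp (ρ' * T)) := by
    intro T
    have h4 : ∑ k ∈ Finset.range T, F k ≤
        (T : ℝ≥0∞) * (Bf * ENNReal.ofReal (Real.exp (ρ' * T))) := by
      calc ∑ k ∈ Finset.range T, F k
          ≤ ∑ _k ∈ Finset.range T, Bf * ENNReal.ofReal (Real.exp (ρ' * T)) := by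
            apply Finset.sum_le_sum
            intro k hk
            refine (hFbd k).trans (mul_le_mul_right ?_ _)
            apply ENNReal.ofReal_le_ofReal
            apply Real.exp_le_exp.mpr
            have hkT : (k : ℝ) ≤ T := by exact_mod_cast (Finset.mem_range.mp hk).le
            nlinarith
        _ = (T : ℝ≥0∞) * (Bf * ENNReal.ofReal (Real.exp (ρ' * T))) := by
            rw [Finset.sum_const, Finset.card_range, nsmul_eq_mul]
    have hchain : (ENNReal.ofReal (Real.exp ρ)) ^ T * W i ≤
        C₃ * (V i + Cd * ((T : ℝ≥0∞) * (Bf * ENNReal.ofReal (Real.exp (ρ' * T))))) := by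
      calc (ENNReal.ofReal (Real.exp ρ)) ^ T * W i ≤ H T := hHlow T
        _ ≤ C₃ * G T := hHup T
        _ ≤ C₃ * (V i + Cd * ∑ k ∈ Finset.range T, F k) := mul_le_mul_right (hGbd T) _
        _ ≤ _ := mul_le_mul_right (add_le_add_right (mul_le_mul_right h4 _) _) _
    refine hchain.trans ?_
    have hT1 : (1 : ℝ≥0∞) ≤ (T : ℝ≥0∞) + 1 := le_add_self
    have h1E : (1 : ℝ≥0∞) ≤ ((T : ℝ≥0∞) + 1) * ENNReal.ofReal (Real.exp (ρ' * T)) := by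
      calc (1 : ℝ≥0∞) = 1 * 1 := (one_mul 1).symm
        _ ≤ _ := mul_le_mul' hT1 (hE1 T)
    calc C₃ * (V i + Cd * ((T : ℝ≥0∞) * (Bf * ENNReal.ofReal (Real.exp (ρ' * T)))))
        = C₃ * V i * 1 + C₃ * (Cd * Bf) * (T : ℝ≥0∞) * ENNReal.ofReal (Real.exp (ρ' * T)) := by
          ring
      _ ≤ C₃ * V i * (((T : ℝ≥0∞) + 1) * ENNReal.ofReal (Real.exp (ρ' * T))) +
            C₃ * (Cd * Bf) * ((T : ℝ≥0∞) + 1) * ENNReal.ofReal (Real.exp (ρ' * T)) := by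
          apply add_le_add
          · exact mul_le_mul_right h1E _
          · exact mul_le_mul_left (mul_le_mul_right le_self_add _) _
      _ = (C₃ * (V i + Cd * Bf)) * ((T : ℝ≥0∞) + 1) * ENNReal.ofReal (Real.exp (ρ' * T)) := by
          ring
  -- pass to the reals
  have hC₆ : C₃ * (V i + Cd * Bf) ≠ ∞ := by
    apply ENNReal.mul_ne_top hC₃
    exact ENNReal.add_ne_top.mpr ⟨hVfin i, ENNReal.mul_ne_top hCd ENNReal.ofReal_ne_top⟩
  set D := (C₃ * (V i + Cd * Bf)).toReal with hDdef
  have hreal : ∀ T : ℕ, Real.exp ρ ^ T * (W i).toReal ≤ D * ((T : ℝ) + 1) * Real.exp (ρ' * T) := by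
    intro T
    have h := hmain T
    have hTfin : ((T : ℝ≥0∞) + 1) ≠ ∞ :=
      ENNReal.add_ne_top.mpr ⟨ENNReal.natCast_ne_top T, ENNReal.one_ne_top⟩
    have hfin : (C₃ * (V i + Cd * Bf)) * ((T : ℝ≥0∞) + 1) * ENNReal.ofReal (Real.exp (ρ' * T)) ≠ ∞ :=
      ENNReal.mul_ne_top (ENNReal.mul_ne_top hC₆ hTfin) ENNReal.ofReal_ne_top
    have h' := ENNReal.toReal_mono hfin h
    rw [ENNReal.toReal_mul, ENNReal.toReal_mul, ENNReal.toReal_mul, ENNReal.toReal_pow,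
      ENNReal.toReal_ofReal (Real.exp_pos ρ).le, ENNReal.toReal_ofReal (Real.exp_pos _).le] at h'
    have hTR : ((T : ℝ≥0∞) + 1).toReal = (T : ℝ) + 1 := by
      rw [ENNReal.toReal_add (ENNReal.natCast_ne_top T) ENNReal.one_ne_top]; simp
    rw [hTR] at h'
    exact h'
  have hwpos : 0 < (W i).toReal := ENNReal.toReal_pos hWpos.ne' hWfin
  set r := Real.exp (ρ' - ρ) with hrdef
  have hr0 : 0 < r := Real.exp_pos _
  have hr1 : r < 1 := by
    have hneg : ρ' - ρ < 0 := by linarith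
    calc r = Real.exp (ρ' - ρ) := hrdef
      _ < Real.exp 0 := Real.exp_lt_exp.mpr hneg
      _ = 1 := Real.exp_zero
  have hsumm : Summable (fun n : ℕ => (n : ℝ) * r ^ n) := by
    have := summable_pow_mul_geometric_of_norm_lt_one (R := ℝ) 1
      (r := r) (by rw [Real.norm_eq_abs, abs_of_pos hr0]; exact hr1)
    simpa using this
  have htend0 : Filter.Tendsto (fun n : ℕ => (n : ℝ) * r ^ n) Filter.atTop (nhds 0) :=
    hsumm.tendsto_atTop_zero
  have htend1 : Filter.Tendsto (fun T : ℕ => ((T + 1 : ℕ) : ℝ) * r ^ (T + 1))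
      Filter.atTop (nhds 0) := htend0.comp (tendsto_add_atTop_nat 1)
  have htend : Filter.Tendsto (fun T : ℕ => D * ((T : ℝ) + 1) * r ^ T) Filter.atTop (nhds 0) := by
    have heq : (fun T : ℕ => D * ((T : ℝ) + 1) * r ^ T) =
        fun T : ℕ => (D / r) * (((T + 1 : ℕ) : ℝ) * r ^ (T + 1)) := by
      funext T
      push_cast
      field_simp
      ring
    rw [heq]
    have h2 := htend1.const_mul (D / r)
    simpa using h2
  obtain ⟨T, hT⟩ := (htend.eventually_lt_const hwpos).exists
  have h1 := hreal T
  have hbpos : 0 < Real.exp (ρ * T) := Real.exp_pos _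
  have hkey : Real.exp (ρ' * T) = Real.exp (ρ * T) * r ^ T := by
    rw [hrdef, ← Real.exp_nat_mul, ← Real.exp_add]
    congr 1
    ring
  have hexpT : Real.exp ρ ^ T = Real.exp (ρ * T) := by
    rw [← Real.exp_nat_mul]; congr 1; ring
  rw [hkey, hexpT] at h1
  have h3 := mul_lt_mul_of_pos_left hT hbpos
  nlinarith [h1, h3, hbpos]

end Master

section AvoidSums
variable (P : ℕ → U → ℕ → ℝ≥0∞) (c : ℕ → U → ℝ) (ζ : ∀ t : ℕ, (Fin (t + 1) → ℕ) → U) (i z : ℕ)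

/-- The path avoids `z` at all times `1, …, T`. -/
def AvoidP (z : ℕ) (T : ℕ) (y : Fin (T + 1) → ℕ) : Prop :=
  ∀ t, 0 < t → t ≤ T → extN T y t ≠ z

/-- Stopped (killed at `z`) expectation of `e^{∑ c}·g(X_T)`. -/
noncomputable def ExA (T : ℕ) (g : ℕ → ℝ≥0∞) : ℝ≥0∞ :=
  ∑' y : Fin (T + 1) → ℕ, (if AvoidP z T y then 1 else 0) *
    ((pathWeight P ζ i T (extN T y) *
      ENNReal.ofReal (Real.exp (∑ t ∈ Finset.range T, c (extN T y t) (act ζ (extN T y) t)))) *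
     g (y (Fin.last T)))

lemma avoidP_zero (y : Fin 1 → ℕ) : AvoidP z 0 y := by
  intro t ht ht'
  omega

lemma avoidP_snoc {T : ℕ} (y : Fin (T + 1) → ℕ) (j : ℕ) :
    AvoidP z (T + 1) (Fin.snoc y j) ↔ (AvoidP z T y ∧ j ≠ z) := by
  constructor
  · intro h
    refine ⟨fun t ht ht' => ?_, ?_⟩
    · have h2 := h t ht (by omega)
      rwa [extN_snoc_of_le y j ht'] at h2
    · have h2 := h (T + 1) (by omega) le_rfl
      rwa [extN_snoc_last] at h2
  · rintro ⟨h1, h2⟩ t ht ht'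
    by_cases hT : t ≤ T
    · rw [extN_snoc_of_le y j hT]
      exact h1 t ht hT
    · have : t = T + 1 := by omega
      subst this
      rwa [extN_snoc_last]

lemma ExA_zero (g : ℕ → ℝ≥0∞) : ExA P c ζ i z 0 g = g i := by
  have h : ExA P c ζ i z 0 g = Ex P c ζ i 0 g := by
    rw [Ex_apply]
    unfold ExA
    congr 1; funext y
    rw [if_pos (avoidP_zero z y), one_mul]
  rw [h, Ex_zero]

lemma ExA_mono_g {g g' : ℕ → ℝ≥0∞} (h : ∀ j, g j ≤ g' j) (T : ℕ) :
    ExA P c ζ i z T g ≤ ExA P c ζ i z T g' := by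
  exact ENNReal.tsum_le_tsum fun y => mul_le_mul_right (mul_le_mul_right (h _) _) _

lemma ExA_smul (a : ℝ≥0∞) (g : ℕ → ℝ≥0∞) (T : ℕ) :
    ExA P c ζ i z T (fun j => a * g j) = a * ExA P c ζ i z T g := by
  unfold ExA
  rw [← ENNReal.tsum_mul_left]
  congr 1; funext y; ring

lemma ExA_add (g g' : ℕ → ℝ≥0∞) (T : ℕ) :
    ExA P c ζ i z T (fun j => g j + g' j) = ExA P c ζ i z T g + ExA P c ζ i z T g' := by
  unfold ExA
  rw [← ENNReal.tsum_add]
  congr 1; funext y; ring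

/-- Killed one-step tower property. -/
lemma ExA_succ (T : ℕ) (g : ℕ → ℝ≥0∞) :
    ExA P c ζ i z (T + 1) g = ∑' y : Fin (T + 1) → ℕ,
      (if AvoidP z T y then 1 else 0) *
      ((pathWeight P ζ i T (extN T y) *
        ENNReal.ofReal (Real.exp (∑ t ∈ Finset.range T, c (extN T y t) (act ζ (extN T y) t)))) *
       (ENNReal.ofReal (Real.exp (c (y (Fin.last T)) (ζ T y))) *
        ∑' j, if j = z then 0 else g j * P (y (Fin.last T)) (ζ T y) j)) := by
  classical
  unfold ExA
  rw [← Equiv.tsum_eq (Fin.insertNthEquiv (fun _ : Fin (T+2) => ℕ) (Fin.last (T+1)))]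
  rw [ENNReal.tsum_prod']
  rw [ENNReal.tsum_comm]
  congr 1; funext y
  have hsymm : ∀ j : ℕ, (Fin.insertNthEquiv (fun _ : Fin (T+2) => ℕ) (Fin.last (T+1))) (j, y)
      = Fin.snoc y j := by
    intro j
    simp only [Fin.insertNthEquiv, Equiv.coe_fn_mk]
    simp [Fin.insertNth_last]
  have key : ∀ j : ℕ,
      (if AvoidP z (T+1) (Fin.snoc y j) then (1:ℝ≥0∞) else 0) *
      ((pathWeight P ζ i (T+1) (extN (T+1) (Fin.snoc y j)) *
        ENNReal.ofReal (Real.exp (∑ t ∈ Finset.range (T+1),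
            c (extN (T+1) (Fin.snoc y j) t) (act ζ (extN (T+1) (Fin.snoc y j)) t)))) *
       g ((Fin.snoc y j : Fin (T+2) → ℕ) (Fin.last (T+1)))) =
      ((if AvoidP z T y then (1:ℝ≥0∞) else 0) *
       ((pathWeight P ζ i T (extN T y) *
        ENNReal.ofReal (Real.exp (∑ t ∈ Finset.range T, c (extN T y t) (act ζ (extN T y) t)))) *
        ENNReal.ofReal (Real.exp (c (y (Fin.last T)) (ζ T y))))) *
      (if j = z then 0 else g j * P (y (Fin.last T)) (ζ T y) j) := by
    intro j
    have hw : pathWeight P ζ i (T+1) (extN (T+1) (Fin.snoc y j)) =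
        pathWeight P ζ i T (extN T y) * P (y (Fin.last T)) (ζ T y) j := by
      unfold pathWeight
      rw [Finset.prod_range_succ]
      have h0 : extN (T+1) (Fin.snoc y j) 0 = extN T y 0 := extN_snoc_of_le y j (Nat.zero_le T)
      have hprod : ∏ t ∈ Finset.range T,
          P (extN (T+1) (Fin.snoc y j) t) (act ζ (extN (T+1) (Fin.snoc y j)) t)
            (extN (T+1) (Fin.snoc y j) (t+1)) =
          ∏ t ∈ Finset.range T, P (extN T y t) (act ζ (extN T y) t) (extN T y (t+1)) := by
        apply Finset.prod_congr rfl
        intro t ht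
        have ht' : t < T := Finset.mem_range.mp ht
        rw [extN_snoc_of_le y j (le_of_lt ht'), act_extN_snoc y j (le_of_lt ht'),
          extN_snoc_of_le y j (by omega)]
      have hlastP : P (extN (T+1) (Fin.snoc y j) T) (act ζ (extN (T+1) (Fin.snoc y j)) T)
          (extN (T+1) (Fin.snoc y j) (T+1)) = P (y (Fin.last T)) (ζ T y) j := by
        rw [extN_snoc_of_le y j le_rfl, act_extN_snoc y j le_rfl, extN_snoc_last, extN_self,
          act_extN_top]
      rw [h0, hprod, hlastP]; ring
    have hsum : (∑ t ∈ Finset.range (T+1),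
        c (extN (T+1) (Fin.snoc y j) t) (act ζ (extN (T+1) (Fin.snoc y j)) t)) =
        (∑ t ∈ Finset.range T, c (extN T y t) (act ζ (extN T y) t)) +
          c (y (Fin.last T)) (ζ T y) := by
      rw [Finset.sum_range_succ]
      congr 1
      · apply Finset.sum_congr rfl
        intro t ht
        have ht' : t < T := Finset.mem_range.mp ht
        rw [extN_snoc_of_le y j (le_of_lt ht'), act_extN_snoc y j (le_of_lt ht')]
      · rw [extN_snoc_of_le y j le_rfl, act_extN_snoc y j le_rfl, extN_self, act_extN_top]
    have hg : (Fin.snoc y j : Fin (T+2) → ℕ) (Fin.last (T+1)) = j := by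
      simp
    have hind : (if AvoidP z (T+1) (Fin.snoc y j) then (1:ℝ≥0∞) else 0) =
        (if AvoidP z T y then (1:ℝ≥0∞) else 0) * (if j = z then 0 else 1) := by
      by_cases h1 : AvoidP z T y <;> by_cases h2 : j = z <;>
        simp [avoidP_snoc, h1, h2]
    rw [hw, hsum, hg, Real.exp_add, ENNReal.ofReal_mul (le_of_lt (Real.exp_pos _)), hind]
    by_cases h2 : j = z
    · simp [h2]
    · simp only [h2, if_neg, ite_false]
      ring
  simp only [hsymm]
  rw [tsum_congr key, ENNReal.tsum_mul_left]
  ring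

end AvoidSums

section AvoidSteps
variable (P : ℕ → U → ℕ → ℝ≥0∞) (c : ℕ → U → ℝ) (ζ : ∀ t : ℕ, (Fin (t + 1) → ℕ) → U) (i z : ℕ)

lemma ExA_succ_le_pt (T : ℕ) {g h : ℕ → ℝ≥0∞}
    (hpt : ∀ y : Fin (T + 1) → ℕ,
      ENNReal.ofReal (Real.exp (c (y (Fin.last T)) (ζ T y))) *
        (∑' j, if j = z then 0 else g j * P (y (Fin.last T)) (ζ T y) j) ≤
        h (y (Fin.last T))) :
    ExA P c ζ i z (T + 1) g ≤ ExA P c ζ i z T h := by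
  rw [ExA_succ]
  unfold ExA
  exact ENNReal.tsum_le_tsum fun y => mul_le_mul_right (mul_le_mul_right (hpt y) _) _

lemma ExA_succ_add_le_pt (T : ℕ) {g k h : ℕ → ℝ≥0∞}
    (hpt : ∀ y : Fin (T + 1) → ℕ,
      ENNReal.ofReal (Real.exp (c (y (Fin.last T)) (ζ T y))) *
        (∑' j, if j = z then 0 else g j * P (y (Fin.last T)) (ζ T y) j) +
        k (y (Fin.last T)) ≤ h (y (Fin.last T))) :
    ExA P c ζ i z (T + 1) g + ExA P c ζ i z T k ≤ ExA P c ζ i z T h := by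
  rw [ExA_succ]
  unfold ExA
  rw [← ENNReal.tsum_add]
  apply ENNReal.tsum_le_tsum
  intro y
  rw [← mul_add, ← mul_add]
  exact mul_le_mul_right (mul_le_mul_right (hpt y) _) _

lemma ExA_succ_add_eq_pt (T : ℕ) {g k h : ℕ → ℝ≥0∞}
    (hpt : ∀ y : Fin (T + 1) → ℕ,
      ENNReal.ofReal (Real.exp (c (y (Fin.last T)) (ζ T y))) *
        (∑' j, if j = z then 0 else g j * P (y (Fin.last T)) (ζ T y) j) +
        k (y (Fin.last T)) = h (y (Fin.last T))) :
    ExA P c ζ i z (T + 1) g + ExA P c ζ i z T k = ExA P c ζ i z T h := by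
  rw [ExA_succ]
  unfold ExA
  rw [← ENNReal.tsum_add]
  congr 1
  funext y
  rw [← mul_add, ← mul_add, hpt y]

lemma ExA_succ_add_ge_pt (T : ℕ) {g k h : ℕ → ℝ≥0∞}
    (hpt : ∀ y : Fin (T + 1) → ℕ,
      h (y (Fin.last T)) ≤
      ENNReal.ofReal (Real.exp (c (y (Fin.last T)) (ζ T y))) *
        (∑' j, if j = z then 0 else g j * P (y (Fin.last T)) (ζ T y) j) +
        k (y (Fin.last T))) :
    ExA P c ζ i z T h ≤ ExA P c ζ i z (T + 1) g + ExA P c ζ i z T k := by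
  rw [ExA_succ]
  unfold ExA
  rw [← ENNReal.tsum_add]
  apply ENNReal.tsum_le_tsum
  intro y
  rw [← mul_add, ← mul_add]
  exact mul_le_mul_right (mul_le_mul_right (hpt y) _) _

end AvoidSteps

lemma tsum_split_at (f : ℕ → ℝ≥0∞) (z : ℕ) :
    ∑' j, f j = f z + ∑' j, if j = z then 0 else f j := by
  classical
  calc ∑' j, f j = ∑' j, ((if j = z then f j else 0) + (if j = z then 0 else f j)) := by
        congr 1; funext j; split <;> simp
    _ = (∑' j, if j = z then f j else 0) + ∑' j, (if j = z then 0 else f j) := ENNReal.tsum_add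
    _ = f z + ∑' j, (if j = z then 0 else f j) := by
        congr 1
        rw [tsum_eq_single z (fun b hb => by simp [hb])]
        simp

lemma exists_min_ennreal {α : Type*} [TopologicalSpace α] {s : Set α}
    (hcpt : IsCompact s) (hne : s.Nonempty)
    (f : α → ℝ≥0∞) (fn : ℕ → α → ℝ≥0∞)
    (hc : ∀ n, ContinuousOn (fn n) s)
    (hf : ∀ u ∈ s, f u = ⨆ n, fn n u) :
    ∃ u₀ ∈ s, ∀ u ∈ s, f u₀ ≤ f u := by
  classical
  have hcs : CompactSpace s := isCompact_iff_compactSpace.mp hcpt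
  have hgn : ∀ n, Continuous (fun x : s => fn n x.1) := fun n => (hc n).restrict
  have hgsup : ∀ x : s, f x.1 = ⨆ n, fn n x.1 := fun x => hf x.1 x.2
  set m := ⨅ x : s, f x.1 with hm
  have hsub : ∀ a : ℝ≥0∞, IsClosed {x : s | f x.1 ≤ a} := by
    intro a
    have hset : {x : s | f x.1 ≤ a} = ⋂ n, {x : s | fn n x.1 ≤ a} := by
      ext x
      simp only [Set.mem_setOf_eq, Set.mem_iInter, hgsup x, iSup_le_iff]
    rw [hset]
    exact isClosed_iInter fun n => isClosed_le (hgn n) continuous_const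
  obtain ⟨u₀, hu₀⟩ := hne
  by_cases hmtop : m = ⊤
  · refine ⟨u₀, hu₀, fun u hu => ?_⟩
    have h1 : m ≤ f u := iInf_le (fun x : s => f x.1) ⟨u, hu⟩
    rw [hmtop] at h1
    rw [top_le_iff.mp h1]
    exact le_top
  · set C : ℕ → Set s := fun n => {x : s | f x.1 ≤ m + ((n : ℝ≥0∞) + 1)⁻¹} with hC
    have hCne : ∀ n, (C n).Nonempty := by
      intro n
      have hlt : m < m + ((n : ℝ≥0∞) + 1)⁻¹ := ENNReal.lt_add_right hmtop (by simp)
      obtain ⟨x, hx⟩ := iInf_lt_iff.mp hlt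
      exact ⟨x, hx.le⟩
    have hCsub : ∀ n, C (n + 1) ⊆ C n := by
      intro n x hx
      refine le_trans hx (add_le_add_right ?_ m)
      apply ENNReal.inv_le_inv.mpr
      push_cast
      exact add_le_add_left (by exact_mod_cast Nat.le_succ n) 1
    obtain ⟨x₁, hx₁⟩ := IsCompact.nonempty_iInter_of_sequence_nonempty_isCompact_isClosed C
      hCsub hCne ((hsub _).isCompact) (fun n => hsub _)
    refine ⟨x₁.1, x₁.2, fun u hu => ?_⟩
    have h1 : f x₁.1 ≤ m := by
      apply ENNReal.le_of_forall_pos_le_add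
      intro ε hε _
      obtain ⟨n, hn⟩ := ENNReal.exists_inv_nat_lt
        (show ((ε : ℝ≥0∞)) ≠ 0 by exact_mod_cast hε.ne')
      have hx := Set.mem_iInter.mp hx₁ n
      calc f x₁.1 ≤ m + ((n : ℝ≥0∞) + 1)⁻¹ := hx
        _ ≤ m + (n : ℝ≥0∞)⁻¹ := add_le_add_right (ENNReal.inv_le_inv.mpr le_self_add) m
        _ ≤ m + ε := add_le_add_right hn.le m
    exact le_trans h1 (iInf_le (fun x : s => f x.1) ⟨u, hu⟩)

lemma Ex_succ_le_pt (P : ℕ → U → ℕ → ℝ≥0∞) (c : ℕ → U → ℝ)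
    (ζ : ∀ t : ℕ, (Fin (t + 1) → ℕ) → U) (i : ℕ) {g h : ℕ → ℝ≥0∞} (T : ℕ)
    (hpt : ∀ y : Fin (T + 1) → ℕ,
      ENNReal.ofReal (Real.exp (c (y (Fin.last T)) (ζ T y))) *
        ∑' j, g j * P (y (Fin.last T)) (ζ T y) j ≤ h (y (Fin.last T))) :
    Ex P c ζ i (T + 1) g ≤ Ex P c ζ i T h := by
  rw [Ex_succ, Ex_apply]
  exact ENNReal.tsum_le_tsum fun y => mul_le_mul_right (hpt y) _

end RSDT

namespace RSDT

/-- Theorem 4.2.  Under (A1) and the strengthened stability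
assumption (A2'), any positive solution `W ∈ 𝔬(𝒱)` of the eigen-equation with
eigenvalue `ρ ≥ λ*` satisfies `ρ = λ*` and is a scalar multiple of `ψ*`. -/
theorem eigen_uniqueness_little_o {U : Type*} [TopologicalSpace U] [MeasurableSpace U]
    (P : ℕ → U → ℕ → ℝ≥0∞) (c : ℕ → U → ℝ) (𝕌 : ℕ → Set U) (i₀ : ℕ)
    (hM : Model P c 𝕌) (hc : ∀ i, ∀ u ∈ 𝕌 i, 0 ≤ c i u)
    (hA1a : A1a P c 𝕌) (hA1b : A1b P 𝕌 i₀)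
    (V : ℕ → ℝ≥0∞) (K : Finset ℕ) (Chat : ℝ≥0∞)
    (hirr : ∀ v : ℕ → U, IsSM 𝕌 v → Irreducible P v)
    -- (A2'): the Lyapunov function is norm-like
    (hVnorm : NormLike fun i => (V i).toReal)
    -- (A2'): a uniformly accessible state `z∘`
    (hz : ∃ z : ℕ, ∀ i, ∃ ε : ℝ≥0∞, 0 < ε ∧ ∀ u ∈ 𝕌 i, ε ≤ P i u z)
    -- (A2'): drift condition, with `c ≤ η ℓ` in case (b)
    (hlyap : (∃ β : ℝ, A2a P c 𝕌 V K Chat β) ∨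
      ∃ (ℓ : ℕ → ℝ) (η : ℝ), A2b P c 𝕌 V K Chat ℓ ∧ 0 < η ∧ η < 1 ∧
        ∀ i, ∀ u ∈ 𝕌 i, c i u ≤ η * ℓ i)
    (ρ : ℝ) (hρ0 : 0 ≤ ρ) (W : ℕ → ℝ≥0∞)
    (hWpos : ∀ i, 0 < W i ∧ W i ≠ ∞)
    (hWo : Filter.Tendsto (fun i => W i / V i) Filter.atTop (nhds (0 : ℝ≥0∞)))
    (hWeq : ∀ i, W i =
      ⨅ u : 𝕌 i, ENNReal.ofReal (Real.exp (c i u.1 - ρ)) * ∑' j, W j * P i u.1 j)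
    (hrhoLam : lamStar P c 𝕌 ≤ (ρ : EReal)) :
    (ρ : EReal) = lamStar P c 𝕌 ∧
    ∀ ψ : ℕ → ℝ≥0∞, (∀ i, 0 < ψ i ∧ ψ i ≠ ∞) → ψ i₀ = 1 →
      (∀ i, EReal.exp (lamStar P c 𝕌) * ψ i = minOp P c 𝕌 ψ i) →
      ∃ κ : ℝ≥0∞, 0 < κ ∧ κ ≠ ∞ ∧ ∀ i, W i = κ * ψ i := by
  classical
  have hVone : ∀ j, 1 ≤ V j := by
    rcases hlyap with ⟨β, ha⟩ | ⟨ℓ, η, hb, _, _, _⟩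
    exacts [ha.Vone, hb.Vone]
  have hVfin : ∀ j, V j ≠ ∞ := by
    rcases hlyap with ⟨β, ha⟩ | ⟨ℓ, η, hb, _, _, _⟩
    exacts [ha.Vfin, hb.Vfin]
  obtain ⟨Cd, hCd, hdr⟩ : ∃ Cd : ℝ≥0∞, Cd ≠ ∞ ∧ ∀ s, ∀ u ∈ 𝕌 s,
      ENNReal.ofReal (Real.exp (c s u)) * ∑' j, V j * P s u j ≤ V s + Cd := by
    rcases hlyap with ⟨β, ha⟩ | ⟨ℓ, η, hb, hη0, hη1, hcη⟩
    · obtain ⟨M, hM1, hM2⟩ := ha.cBdd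
      refine ⟨ENNReal.ofReal (Real.exp M) * Chat,
        ENNReal.mul_ne_top ENNReal.ofReal_ne_top ha.ChatFin, ?_⟩
      intro s u hu
      have hβ0 : (0:ℝ) < 1 - β := by linarith [ha.betaLtOne]
      have hfac : Real.exp M * (1 - β) ≤ 1 := by
        have h1 : Real.exp M < 1 / (1 - β) := by
          have h2 := Real.exp_lt_exp.mpr hM1
          rwa [Real.exp_log (by positivity)] at h2
        rw [lt_div_iff₀ hβ0] at h1
        linarith
      calc ENNReal.ofReal (Real.exp (c s u)) * ∑' j, V j * P s u j
          ≤ ENNReal.ofReal (Real.exp M) *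
            (ENNReal.ofReal (1 - β) * V s + (if s ∈ K then Chat else 0)) :=
            mul_le_mul' (ENNReal.ofReal_le_ofReal (Real.exp_le_exp.mpr (hM2 s u hu)))
              (ha.lyap s u hu)
        _ = (ENNReal.ofReal (Real.exp M) * ENNReal.ofReal (1 - β)) * V s
            + ENNReal.ofReal (Real.exp M) * (if s ∈ K then Chat else 0) := by ring
        _ ≤ 1 * V s + ENNReal.ofReal (Real.exp M) * Chat := by
            apply add_le_add
            · apply mul_le_mul_left
              rw [← ENNReal.ofReal_mul (Real.exp_pos M).le]
              exact ENNReal.ofReal_le_one.mpr hfac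
            · exact mul_le_mul_right (by split <;> simp) _
        _ = V s + ENNReal.ofReal (Real.exp M) * Chat := by rw [one_mul]
    · refine ⟨∑ k ∈ K, ENNReal.ofReal (Real.exp (η * ℓ k)) * Chat, ?_, ?_⟩
      · refine (ENNReal.sum_lt_top.mpr fun k _ => ?_).ne
        exact (ENNReal.mul_ne_top ENNReal.ofReal_ne_top hb.ChatFin).lt_top
      · intro s u hu
        have h1 : ENNReal.ofReal (Real.exp (c s u)) ≤ ENNReal.ofReal (Real.exp (η * ℓ s)) :=
          ENNReal.ofReal_le_ofReal (Real.exp_le_exp.mpr (hcη s u hu))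
        calc ENNReal.ofReal (Real.exp (c s u)) * ∑' j, V j * P s u j
            ≤ ENNReal.ofReal (Real.exp (η * ℓ s)) *
              ((if s ∈ K then Chat else 0) + ENNReal.ofReal (Real.exp (-ℓ s)) * V s) :=
              mul_le_mul' h1 (hb.lyap s u hu)
          _ = ENNReal.ofReal (Real.exp (η * ℓ s)) * (if s ∈ K then Chat else 0)
              + (ENNReal.ofReal (Real.exp (η * ℓ s)) * ENNReal.ofReal (Real.exp (-ℓ s))) * V s := by
              ring
          _ ≤ (∑ k ∈ K, ENNReal.ofReal (Real.exp (η * ℓ k)) * Chat) + 1 * V s := by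
              apply add_le_add
              · by_cases hs : s ∈ K
                · simp only [hs, if_true]
                  exact Finset.single_le_sum
                    (f := fun k => ENNReal.ofReal (Real.exp (η * ℓ k)) * Chat)
                    (fun k _ => zero_le) hs
                · simp [hs]
              · apply mul_le_mul_left
                rw [← ENNReal.ofReal_mul (Real.exp_pos _).le, ← Real.exp_add]
                apply ENNReal.ofReal_le_one.mpr
                have hle0 : η * ℓ s + -ℓ s ≤ 0 := by nlinarith [hb.ellNonneg s]
                calc Real.exp (η * ℓ s + -ℓ s) ≤ Real.exp 0 := Real.exp_le_exp.mpr hle0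
                  _ = 1 := Real.exp_zero
          _ = V s + ∑ k ∈ K, ENNReal.ofReal (Real.exp (η * ℓ k)) * Chat := by
              rw [one_mul, add_comm]
  have hsup : ∀ s, ∀ u ∈ 𝕌 s, ENNReal.ofReal (Real.exp ρ) * W s ≤
      ENNReal.ofReal (Real.exp (c s u)) * ∑' j, W j * P s u j := by
    intro s u hu
    have h1 : W s ≤ ENNReal.ofReal (Real.exp (c s u - ρ)) * ∑' j, W j * P s u j := by
      rw [hWeq s]
      exact iInf_le _ (⟨u, hu⟩ : 𝕌 s)
    calc ENNReal.ofReal (Real.exp ρ) * W s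
        ≤ ENNReal.ofReal (Real.exp ρ) *
          (ENNReal.ofReal (Real.exp (c s u - ρ)) * ∑' j, W j * P s u j) :=
          mul_le_mul_right h1 _
      _ = ENNReal.ofReal (Real.exp ρ * Real.exp (c s u - ρ)) * ∑' j, W j * P s u j := by
          rw [ENNReal.ofReal_mul (Real.exp_pos ρ).le, mul_assoc]
      _ = ENNReal.ofReal (Real.exp (c s u)) * ∑' j, W j * P s u j := by
          rw [← Real.exp_add]
          congr 2
          ring
  obtain ⟨C₃, hC₃, hWbd⟩ : ∃ C₃ : ℝ≥0∞, C₃ ≠ ∞ ∧ ∀ j, W j ≤ C₃ * V j := by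
    have hev := hWo.eventually_lt_const zero_lt_one
    obtain ⟨N, hN⟩ := Filter.eventually_atTop.mp hev
    refine ⟨1 + ∑ k ∈ Finset.range N, W k, ?_, ?_⟩
    · apply ENNReal.add_ne_top.mpr
      exact ⟨ENNReal.one_ne_top, (ENNReal.sum_lt_top.mpr fun k _ => (hWpos k).2.lt_top).ne⟩
    · intro j
      rcases le_or_gt N j with hj | hj
      · have h1 := hN j hj
        have hVne : V j ≠ 0 := by
          intro h0
          have h2 := hVone j
          rw [h0] at h2
          exact absurd h2 (by simp)
        have h2 : W j < 1 * V j := (ENNReal.div_lt_iff (Or.inl hVne) (Or.inl (hVfin j))).mp h1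
        rw [one_mul] at h2
        calc W j ≤ V j := h2.le
          _ = 1 * V j := (one_mul _).symm
          _ ≤ _ := mul_le_mul_left le_self_add _
      · calc W j ≤ ∑ k ∈ Finset.range N, W k :=
            Finset.single_le_sum (fun k _ => zero_le) (Finset.mem_range.mpr hj)
          _ ≤ 1 + ∑ k ∈ Finset.range N, W k := le_add_self
          _ = (1 + ∑ k ∈ Finset.range N, W k) * 1 := (mul_one _).symm
          _ ≤ _ := mul_le_mul_right (hVone j) _
  have hge : (ρ : EReal) ≤ lamStar P c 𝕌 := by
    unfold lamStar
    refine le_iInf fun j => le_iInf fun ζs => ?_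
    exact rho_le_ergCost hM hc hVfin hCd hdr hC₃ hWbd hsup ζs.2 j (hWpos j).1 (hWpos j).2
  have hlameq : (ρ : EReal) = lamStar P c 𝕌 := le_antisymm hge hrhoLam
  refine ⟨hlameq, ?_⟩
  intro ψ hψpos hψi₀ hψeq
  -- ψ's eigen-equation with `exp ρ`
  have hψ : ∀ s, ENNReal.ofReal (Real.exp ρ) * ψ s =
      ⨅ u : 𝕌 s, ENNReal.ofReal (Real.exp (c s u.1)) * ∑' j, ψ j * P s u.1 j := by
    intro s
    have h := hψeq s
    rw [← hlameq, EReal.exp_coe] at h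
    exact h
  have hψsub : ∀ s, ∀ u ∈ 𝕌 s, ENNReal.ofReal (Real.exp ρ) * ψ s ≤
      ENNReal.ofReal (Real.exp (c s u)) * ∑' j, ψ j * P s u j := by
    intro s u hu
    rw [hψ s]
    exact iInf_le _ (⟨u, hu⟩ : 𝕌 s)
  obtain ⟨z, hzz⟩ := hz
  choose εz hεz hεzP using hzz
  -- an exact minimizing selector for ψ
  have hPfin : ∀ s, ∀ u ∈ 𝕌 s, ∀ j, P s u j ≤ 1 := by
    intro s u hu j
    rw [← hM.prob s u hu]
    exact ENNReal.le_tsum j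
  have hPcont : ∀ s j, ContinuousOn (fun u => (P s u j).toReal) (𝕌 s) := by
    intro s j
    have h := hA1a.PCont s (fun k => if k = j then 1 else 0)
      ⟨1, fun k => by by_cases h : k = j <;> simp [h]⟩
    apply h.congr
    intro u _
    dsimp only
    rw [tsum_eq_single j (fun b hb => by simp [hb])]
    simp
  have hsel : ∀ s : ℕ, ∃ u₀ ∈ 𝕌 s, ∀ u ∈ 𝕌 s,
      ENNReal.ofReal (Real.exp (c s u₀)) * ∑' j, ψ j * P s u₀ j ≤
      ENNReal.ofReal (Real.exp (c s u)) * ∑' j, ψ j * P s u j := by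
    intro s
    apply exists_min_ennreal (hM.compact s) (hM.nonempty s) _
      (fun n u => ENNReal.ofReal
        (Real.exp (c s u) * ∑ j ∈ Finset.range n, (ψ j).toReal * (P s u j).toReal))
    · intro n
      apply ENNReal.continuous_ofReal.comp_continuousOn
      apply ContinuousOn.mul
      · exact Real.continuous_exp.comp_continuousOn (hA1a.cCont s)
      · apply continuousOn_finset_sum
        intro j _
        exact continuousOn_const.mul (hPcont s j)
    · intro u hu
      have hsplit : ∀ n : ℕ, ENNReal.ofReal
          (Real.exp (c s u) * ∑ j ∈ Finset.range n, (ψ j).toReal * (P s u j).toReal)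
          = ENNReal.ofReal (Real.exp (c s u)) * ∑ j ∈ Finset.range n, ψ j * P s u j := by
        intro n
        rw [ENNReal.ofReal_mul (Real.exp_pos _).le]
        congr 1
        rw [ENNReal.ofReal_sum_of_nonneg
          (fun j _ => mul_nonneg ENNReal.toReal_nonneg ENNReal.toReal_nonneg)]
        apply Finset.sum_congr rfl
        intro j _
        rw [ENNReal.ofReal_mul ENNReal.toReal_nonneg, ENNReal.ofReal_toReal (hψpos j).2,
          ENNReal.ofReal_toReal ((hPfin s u hu j).trans_lt ENNReal.one_lt_top).ne]
      simp only [hsplit]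
      rw [ENNReal.tsum_eq_iSup_nat, ENNReal.mul_iSup]
  choose vt hvtmem hvtmin using hsel
  have hψex : ∀ s, ENNReal.ofReal (Real.exp ρ) * ψ s =
      ENNReal.ofReal (Real.exp (c s (vt s))) * ∑' j, ψ j * P s (vt s) j := by
    intro s
    rw [hψ s]
    apply le_antisymm
    · exact iInf_le _ (⟨vt s, hvtmem s⟩ : 𝕌 s)
    · exact le_iInf fun u => hvtmin s u.1 u.2
  -- drift constants for the killed chain
  obtain ⟨K₂, hK₂z, γ₀, hγ₀1, hγ⟩ : ∃ K₂ : Finset ℕ, z ∈ K₂ ∧ ∃ γ₀ : ℝ≥0∞, γ₀ < 1 ∧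
      ∀ s ∉ K₂, ∀ u ∈ 𝕌 s, ENNReal.ofReal (Real.exp (c s u)) * ∑' j, V j * P s u j ≤
        ENNReal.ofReal (Real.exp ρ) * (γ₀ * V s) := by
    rcases hlyap with ⟨β, ha⟩ | ⟨ℓ, η, hb, hη0, hη1, hcη⟩
    · obtain ⟨M, hM1, hM2⟩ := ha.cBdd
      have hβ0 : (0:ℝ) < 1 - β := by linarith [ha.betaLtOne]
      have hfac : Real.exp M * (1 - β) < 1 := by
        have h1 : Real.exp M < 1 / (1 - β) := by
          have h2 := Real.exp_lt_exp.mpr hM1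
          rwa [Real.exp_log (by positivity)] at h2
        rw [lt_div_iff₀ hβ0] at h1
        linarith
      refine ⟨insert z K, Finset.mem_insert_self z K,
        ENNReal.ofReal (Real.exp (-ρ) * (Real.exp M * (1 - β))), ?_, ?_⟩
      · calc ENNReal.ofReal (Real.exp (-ρ) * (Real.exp M * (1 - β)))
            ≤ ENNReal.ofReal (1 * (Real.exp M * (1 - β))) := by
              apply ENNReal.ofReal_le_ofReal
              apply mul_le_mul_of_nonneg_right _ (by positivity)
              rw [show (1:ℝ) = Real.exp 0 by simp]
              exact Real.exp_le_exp.mpr (by linarith)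
          _ < 1 := by
              rw [one_mul]
              exact ENNReal.ofReal_lt_one.mpr hfac
      · intro s hs u hu
        have hsK : s ∉ K := fun h => hs (Finset.mem_insert_of_mem h)
        have hkey : ENNReal.ofReal (Real.exp ρ) *
            (ENNReal.ofReal (Real.exp (-ρ) * (Real.exp M * (1 - β))) * V s) =
            ENNReal.ofReal (Real.exp M * (1 - β)) * V s := by
          rw [← mul_assoc, ← ENNReal.ofReal_mul (Real.exp_pos _).le]
          congr 2
          rw [← mul_assoc, ← Real.exp_add, add_neg_cancel, Real.exp_zero, one_mul]
        rw [hkey]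
        calc ENNReal.ofReal (Real.exp (c s u)) * ∑' j, V j * P s u j
            ≤ ENNReal.ofReal (Real.exp M) *
              (ENNReal.ofReal (1 - β) * V s + (if s ∈ K then Chat else 0)) :=
              mul_le_mul' (ENNReal.ofReal_le_ofReal (Real.exp_le_exp.mpr (hM2 s u hu)))
                (ha.lyap s u hu)
          _ = ENNReal.ofReal (Real.exp M) * (ENNReal.ofReal (1 - β) * V s) := by
              rw [if_neg hsK, add_zero]
          _ = ENNReal.ofReal (Real.exp M * (1 - β)) * V s := by
              rw [ENNReal.ofReal_mul (Real.exp_pos _).le, mul_assoc]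
    · refine ⟨insert z (K ∪ (hb.ellNormLike 1).toFinset),
        Finset.mem_insert_self _ _, ENNReal.ofReal (Real.exp (-ρ + (η - 1))), ?_, ?_⟩
      · apply ENNReal.ofReal_lt_one.mpr
        calc Real.exp (-ρ + (η - 1)) < Real.exp 0 := Real.exp_lt_exp.mpr (by linarith)
          _ = 1 := Real.exp_zero
      · intro s hs u hu
        have hsK : s ∉ K := fun h => hs (Finset.mem_insert_of_mem (Finset.mem_union_left _ h))
        have hsl : ¬ (ℓ s ≤ 1) := by
          intro h
          exact hs (Finset.mem_insert_of_mem (Finset.mem_union_right _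
            ((hb.ellNormLike 1).mem_toFinset.mpr h)))
        have hsl' : (1:ℝ) ≤ ℓ s := le_of_not_ge hsl
        have hkey : ENNReal.ofReal (Real.exp ρ) *
            (ENNReal.ofReal (Real.exp (-ρ + (η - 1))) * V s) =
            ENNReal.ofReal (Real.exp (η - 1)) * V s := by
          rw [← mul_assoc, ← ENNReal.ofReal_mul (Real.exp_pos _).le, ← Real.exp_add]
          congr 2
          ring
        rw [hkey]
        calc ENNReal.ofReal (Real.exp (c s u)) * ∑' j, V j * P s u j
            ≤ ENNReal.ofReal (Real.exp (η * ℓ s)) *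
              ((if s ∈ K then Chat else 0) + ENNReal.ofReal (Real.exp (-ℓ s)) * V s) :=
              mul_le_mul' (ENNReal.ofReal_le_ofReal (Real.exp_le_exp.mpr (hcη s u hu)))
                (hb.lyap s u hu)
          _ = ENNReal.ofReal (Real.exp (η * ℓ s)) * ENNReal.ofReal (Real.exp (-ℓ s)) * V s := by
              rw [if_neg hsK, zero_add, mul_assoc]
          _ = ENNReal.ofReal (Real.exp (η * ℓ s + -ℓ s)) * V s := by
              rw [Real.exp_add, ENNReal.ofReal_mul (Real.exp_pos _).le]
          _ ≤ ENNReal.ofReal (Real.exp (η - 1)) * V s := by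
              apply mul_le_mul_left
              apply ENNReal.ofReal_le_ofReal
              apply Real.exp_le_exp.mpr
              nlinarith [hb.ellNonneg s]
  have hK₂ne : K₂.Nonempty := ⟨z, hK₂z⟩
  set δ := K₂.inf' hK₂ne (fun s => ENNReal.ofReal (Real.exp (-ρ)) * (ψ z * εz s) / ψ s)
    with hδdef
  have hδpos : 0 < δ := by
    rw [hδdef, Finset.lt_inf'_iff]
    intro s _
    exact ENNReal.div_pos
      (mul_ne_zero (ENNReal.ofReal_pos.mpr (Real.exp_pos _)).ne'
        (mul_ne_zero (hψpos z).1.ne' (hεz s).ne')) (hψpos s).2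
  have hexpcancel : ENNReal.ofReal (Real.exp ρ) * ENNReal.ofReal (Real.exp (-ρ)) = 1 := by
    rw [← ENNReal.ofReal_mul (Real.exp_pos _).le, ← Real.exp_add, add_neg_cancel,
      Real.exp_zero, ENNReal.ofReal_one]
  have hδle : ∀ s ∈ K₂, ENNReal.ofReal (Real.exp ρ) * (δ * ψ s) ≤
      ENNReal.ofReal (Real.exp (c s (vt s))) * (ψ z * P s (vt s) z) := by
    intro s hs
    have h1 : δ * ψ s ≤ ENNReal.ofReal (Real.exp (-ρ)) * (ψ z * εz s) := by
      calc δ * ψ s ≤ (ENNReal.ofReal (Real.exp (-ρ)) * (ψ z * εz s) / ψ s) * ψ s :=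
            mul_le_mul_left (Finset.inf'_le _ hs) _
        _ = _ := ENNReal.div_mul_cancel (hψpos s).1.ne' (hψpos s).2
    calc ENNReal.ofReal (Real.exp ρ) * (δ * ψ s)
        ≤ ENNReal.ofReal (Real.exp ρ) * (ENNReal.ofReal (Real.exp (-ρ)) * (ψ z * εz s)) :=
          mul_le_mul_right h1 _
      _ = ψ z * εz s := by rw [← mul_assoc, hexpcancel, one_mul]
      _ ≤ 1 * (ψ z * P s (vt s) z) := by
          rw [one_mul]
          exact mul_le_mul_right (hεzP s (vt s) (hvtmem s)) _
      _ ≤ _ := by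
          apply mul_le_mul_left
          rw [show (1:ℝ≥0∞) = ENNReal.ofReal (Real.exp 0) by simp]
          exact ENNReal.ofReal_le_ofReal (Real.exp_le_exp.mpr (hc s (vt s) (hvtmem s)))
  set Cx := ENNReal.ofReal (Real.exp (-ρ)) * K₂.sup (fun s => (V s + Cd) / ψ s) with hCxdef
  have hCxfin : Cx ≠ ∞ := by
    apply ENNReal.mul_ne_top ENNReal.ofReal_ne_top
    apply ne_of_lt
    apply Finset.sup_lt_iff (show (⊥:ℝ≥0∞) < ⊤ by simp) |>.mpr
    intro s _
    exact ENNReal.div_lt_top (ENNReal.add_ne_top.mpr ⟨hVfin s, hCd⟩) (hψpos s).1.ne'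
  have PFψ : ∀ s, ENNReal.ofReal (Real.exp (c s (vt s))) *
        (∑' j, if j = z then 0 else ψ j * P s (vt s) j) +
      ENNReal.ofReal (Real.exp (c s (vt s))) * (ψ z * P s (vt s) z) =
      ENNReal.ofReal (Real.exp ρ) * ψ s := by
    intro s
    rw [hψex s, tsum_split_at (fun j => ψ j * P s (vt s) j) z]
    ring
  have PFψkill : ∀ s, ENNReal.ofReal (Real.exp (c s (vt s))) *
        (∑' j, if j = z then 0 else ψ j * P s (vt s) j) +
      ENNReal.ofReal (Real.exp ρ) * (δ * (if s ∈ K₂ then ψ s else 0)) ≤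
      ENNReal.ofReal (Real.exp ρ) * ψ s := by
    intro s
    by_cases hs : s ∈ K₂
    · rw [if_pos hs]
      calc _ ≤ ENNReal.ofReal (Real.exp (c s (vt s))) *
            (∑' j, if j = z then 0 else ψ j * P s (vt s) j) +
          ENNReal.ofReal (Real.exp (c s (vt s))) * (ψ z * P s (vt s) z) :=
            add_le_add_right (hδle s hs) _
        _ = _ := PFψ s
    · rw [if_neg hs, mul_zero, mul_zero, add_zero, ← PFψ s]
      exact le_self_add
  have PFW : ∀ s, ENNReal.ofReal (Real.exp ρ) * W s ≤
      ENNReal.ofReal (Real.exp (c s (vt s))) * (∑' j, if j = z then 0 else W j * P s (vt s) j) +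
      ENNReal.ofReal (Real.exp (c s (vt s))) * (W z * P s (vt s) z) := by
    intro s
    calc ENNReal.ofReal (Real.exp ρ) * W s
        ≤ ENNReal.ofReal (Real.exp (c s (vt s))) * ∑' j, W j * P s (vt s) j :=
          hsup s (vt s) (hvtmem s)
      _ = _ := by rw [tsum_split_at (fun j => W j * P s (vt s) j) z]; ring
  have PFV : ∀ s, ENNReal.ofReal (Real.exp (c s (vt s))) *
        (∑' j, if j = z then 0 else V j * P s (vt s) j) ≤
      ENNReal.ofReal (Real.exp ρ) * (γ₀ * V s + Cx * (if s ∈ K₂ then ψ s else 0)) := by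
    intro s
    have hS : (∑' j, if j = z then 0 else V j * P s (vt s) j) ≤ ∑' j, V j * P s (vt s) j := by
      apply ENNReal.tsum_le_tsum
      intro j
      by_cases hj : j = z <;> simp [hj]
    by_cases hs : s ∈ K₂
    · rw [if_pos hs]
      have h1 : ENNReal.ofReal (Real.exp (c s (vt s))) * ∑' j, V j * P s (vt s) j ≤ V s + Cd :=
        hdr s (vt s) (hvtmem s)
      have h2 : V s + Cd ≤ ENNReal.ofReal (Real.exp ρ) * (Cx * ψ s) := by
        have h3 : (V s + Cd) / ψ s ≤ K₂.sup (fun s => (V s + Cd) / ψ s) :=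
          Finset.le_sup (f := fun s => (V s + Cd) / ψ s) hs
        have h4 : ENNReal.ofReal (Real.exp ρ) * (Cx * ψ s) =
            (ENNReal.ofReal (Real.exp ρ) * ENNReal.ofReal (Real.exp (-ρ))) *
            (K₂.sup (fun s => (V s + Cd) / ψ s) * ψ s) := by
          rw [hCxdef]; ring
        calc V s + Cd = (V s + Cd) / ψ s * ψ s :=
              (ENNReal.div_mul_cancel (hψpos s).1.ne' (hψpos s).2).symm
          _ ≤ K₂.sup (fun s => (V s + Cd) / ψ s) * ψ s := mul_le_mul_left h3 _
          _ = _ := by rw [h4, hexpcancel, one_mul]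
      calc _ ≤ V s + Cd := le_trans (mul_le_mul_right hS _) h1
        _ ≤ ENNReal.ofReal (Real.exp ρ) * (Cx * ψ s) := h2
        _ ≤ _ := mul_le_mul_right le_add_self _
    · rw [if_neg hs, mul_zero, add_zero]
      exact le_trans (mul_le_mul_right hS _) (hγ s hs (vt s) (hvtmem s))
  -- the key comparison `ψ z * W ≤ W z * ψ` via stopped path sums
  have hLOW : ∀ a : ℕ, ψ z * W a ≤ W z * ψ a := by
    intro a
    set ζs := smPolicy vt with hζs
    set d := ENNReal.ofReal (Real.exp (-ρ)) with hd
    set e := ENNReal.ofReal (Real.exp ρ) with he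
    have hde : d * e = 1 := by rw [mul_comm]; exact hexpcancel
    set A := fun (T : ℕ) (g : ℕ → ℝ≥0∞) => ExA P c ζs a z T g with hA
    set kz := fun s => ENNReal.ofReal (Real.exp (c s (vt s))) * P s (vt s) z with hkz
    set NZ := fun (T : ℕ) => A T kz with hNZ
    set KI := fun (T : ℕ) => A T (fun s => if s ∈ K₂ then ψ s else 0) with hKI
    have hAsmul : ∀ (b : ℝ≥0∞) (g : ℕ → ℝ≥0∞) (T : ℕ),
        A T (fun s => b * g s) = b * A T g := fun b g T => ExA_smul P c ζs a z b g T
    have hAadd : ∀ (g g' : ℕ → ℝ≥0∞) (T : ℕ),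
        A T (fun s => g s + g' s) = A T g + A T g' := fun g g' T => ExA_add P c ζs a z g g' T
    -- one-step relations
    have Eψ : ∀ T, A (T + 1) ψ + ψ z * NZ T = e * A T ψ := by
      intro T
      have h1 : A (T + 1) ψ + A T (fun s => ψ z * kz s) = A T (fun s => e * ψ s) := by
        apply ExA_succ_add_eq_pt
        intro y
        have hpf := PFψ (y (Fin.last T))
        calc ENNReal.ofReal (Real.exp (c (y (Fin.last T)) (ζs T y))) *
              (∑' j, if j = z then 0 else ψ j * P (y (Fin.last T)) (ζs T y) j) +
              ψ z * kz (y (Fin.last T))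
            = ENNReal.ofReal (Real.exp (c (y (Fin.last T)) (vt (y (Fin.last T))))) *
              (∑' j, if j = z then 0 else ψ j * P (y (Fin.last T)) (vt (y (Fin.last T))) j) +
              ENNReal.ofReal (Real.exp (c (y (Fin.last T)) (vt (y (Fin.last T))))) *
              (ψ z * P (y (Fin.last T)) (vt (y (Fin.last T))) z) := by
              simp only [hζs, smPolicy, hkz]
              ring
          _ = e * ψ (y (Fin.last T)) := hpf
      rw [hAsmul, hAsmul] at h1
      exact h1
    have EW : ∀ T, e * A T W ≤ A (T + 1) W + W z * NZ T := by
      intro T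
      have h1 : A T (fun s => e * W s) ≤ A (T + 1) W + A T (fun s => W z * kz s) := by
        apply ExA_succ_add_ge_pt
        intro y
        have hpf := PFW (y (Fin.last T))
        calc e * W (y (Fin.last T))
            ≤ ENNReal.ofReal (Real.exp (c (y (Fin.last T)) (vt (y (Fin.last T))))) *
              (∑' j, if j = z then 0 else W j * P (y (Fin.last T)) (vt (y (Fin.last T))) j) +
              ENNReal.ofReal (Real.exp (c (y (Fin.last T)) (vt (y (Fin.last T))))) *
              (W z * P (y (Fin.last T)) (vt (y (Fin.last T))) z) := hpf
          _ = ENNReal.ofReal (Real.exp (c (y (Fin.last T)) (ζs T y))) *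
              (∑' j, if j = z then 0 else W j * P (y (Fin.last T)) (ζs T y) j) +
              W z * kz (y (Fin.last T)) := by
              simp only [hζs, smPolicy, hkz]
              ring
      rw [hAsmul, hAsmul] at h1
      exact h1
    have EK : ∀ T, A (T + 1) ψ + e * (δ * KI T) ≤ e * A T ψ := by
      intro T
      have h1 : A (T + 1) ψ + A T (fun s => e * (δ * (if s ∈ K₂ then ψ s else 0))) ≤
          A T (fun s => e * ψ s) := by
        apply ExA_succ_add_le_pt
        intro y
        exact PFψkill (y (Fin.last T))
      simp only [hAsmul] at h1
      exact h1
    have EV : ∀ T, A (T + 1) V ≤ e * (γ₀ * A T V + Cx * KI T) := by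
      intro T
      have h1 : A (T + 1) V ≤
          A T (fun s => e * (γ₀ * V s + Cx * (if s ∈ K₂ then ψ s else 0))) := by
        apply ExA_succ_le_pt
        intro y
        exact PFV (y (Fin.last T))
      simp only [hAsmul, hAadd] at h1
      exact h1
    -- discounted telescopes
    have hdpow : ∀ T : ℕ, d ^ (T + 1) * e = d ^ T := by
      intro T
      rw [pow_succ, mul_assoc, hde, mul_one]
    have Tψ : ∀ T, ψ a = d ^ T * A T ψ + ψ z * ∑ t ∈ Finset.range T, d ^ (t + 1) * NZ t := by
      intro T
      induction T with
      | zero => simp [hA, ExA_zero]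
      | succ T ih =>
        have h1 : d ^ (T + 1) * (A (T + 1) ψ + ψ z * NZ T) = d ^ (T + 1) * (e * A T ψ) := by
          rw [Eψ T]
        have h2 : d ^ (T + 1) * (e * A T ψ) = d ^ T * A T ψ := by
          rw [← mul_assoc, hdpow T]
        rw [ih, ← h2, ← h1, Finset.sum_range_succ]
        ring
    have TW : ∀ T, W a ≤ d ^ T * A T W + W z * ∑ t ∈ Finset.range T, d ^ (t + 1) * NZ t := by
      intro T
      induction T with
      | zero => simp [hA, ExA_zero]
      | succ T ih =>
        have h1 : d ^ T * A T W ≤ d ^ (T + 1) * A (T + 1) W + d ^ (T + 1) * (W z * NZ T) := by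
          calc d ^ T * A T W = d ^ (T + 1) * (e * A T W) := by rw [← mul_assoc, hdpow T]
            _ ≤ d ^ (T + 1) * (A (T + 1) W + W z * NZ T) := mul_le_mul_right (EW T) _
            _ = _ := by ring
        calc W a ≤ d ^ T * A T W + W z * ∑ t ∈ Finset.range T, d ^ (t + 1) * NZ t := ih
          _ ≤ (d ^ (T + 1) * A (T + 1) W + d ^ (T + 1) * (W z * NZ T)) +
              W z * ∑ t ∈ Finset.range T, d ^ (t + 1) * NZ t := add_le_add_left h1 _
          _ = d ^ (T + 1) * A (T + 1) W +
              W z * ∑ t ∈ Finset.range (T + 1), d ^ (t + 1) * NZ t := by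
              rw [Finset.sum_range_succ]
              ring
    have TK : ∀ T, d ^ T * A T ψ + δ * ∑ t ∈ Finset.range T, d ^ t * KI t ≤ ψ a := by
      intro T
      induction T with
      | zero => simp [hA, ExA_zero]
      | succ T ih =>
        have h1 : d ^ (T + 1) * A (T + 1) ψ + δ * (d ^ T * KI T) ≤ d ^ T * A T ψ := by
          calc d ^ (T + 1) * A (T + 1) ψ + δ * (d ^ T * KI T)
              = d ^ (T + 1) * (A (T + 1) ψ + e * (δ * KI T)) := by
                rw [show d ^ T * KI T = d ^ (T + 1) * e * KI T by rw [hdpow T]]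
                ring
            _ ≤ d ^ (T + 1) * (e * A T ψ) := mul_le_mul_right (EK T) _
            _ = d ^ T * A T ψ := by rw [← mul_assoc, hdpow T]
        calc d ^ (T + 1) * A (T + 1) ψ + δ * ∑ t ∈ Finset.range (T + 1), d ^ t * KI t
            = (d ^ (T + 1) * A (T + 1) ψ + δ * (d ^ T * KI T)) +
              δ * ∑ t ∈ Finset.range T, d ^ t * KI t := by
              rw [Finset.sum_range_succ]
              ring
          _ ≤ d ^ T * A T ψ + δ * ∑ t ∈ Finset.range T, d ^ t * KI t := add_le_add_left h1 _
          _ ≤ ψ a := ih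
    -- occupation bound
    have hKQ : δ * ∑' t, d ^ t * KI t ≤ ψ a := by
      rw [ENNReal.tsum_eq_iSup_nat, ENNReal.mul_iSup]
      apply iSup_le
      intro n
      calc δ * ∑ t ∈ Finset.range n, d ^ t * KI t
          ≤ d ^ n * A n ψ + δ * ∑ t ∈ Finset.range n, d ^ t * KI t := le_add_self
        _ ≤ ψ a := TK n
    have hQfin : (∑' t, d ^ t * KI t) ≠ ⊤ := by
      intro h
      rw [h, ENNReal.mul_top hδpos.ne'] at hKQ
      exact (hψpos a).2 (top_le_iff.mp hKQ)
    -- decay of the V-mass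
    have EVd : ∀ T, d ^ (T + 1) * A (T + 1) V ≤
        γ₀ * (d ^ T * A T V) + Cx * (d ^ T * KI T) := by
      intro T
      calc d ^ (T + 1) * A (T + 1) V ≤ d ^ (T + 1) * (e * (γ₀ * A T V + Cx * KI T)) :=
            mul_le_mul_right (EV T) _
        _ = d ^ T * (γ₀ * A T V + Cx * KI T) := by rw [← mul_assoc, hdpow T]
        _ = γ₀ * (d ^ T * A T V) + Cx * (d ^ T * KI T) := by ring
    have hAVfin : ∀ T, d ^ T * A T V ≠ ⊤ := by
      intro T
      induction T with
      | zero => simp [hA, ExA_zero, hVfin a]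
      | succ T ih =>
        apply ne_top_of_le_ne_top _ (EVd T)
        apply ENNReal.add_ne_top.mpr
        constructor
        · exact ENNReal.mul_ne_top (ne_top_of_lt (lt_of_lt_of_le hγ₀1 le_top)) ih
        · exact ENNReal.mul_ne_top hCxfin
            (ne_top_of_le_ne_top hQfin (ENNReal.le_tsum T))
    set Q := ∑' t, d ^ t * KI t with hQ
    set B := V a + Cx * Q with hB
    have hBfin : B ≠ ⊤ :=
      ENNReal.add_ne_top.mpr ⟨hVfin a, ENNReal.mul_ne_top hCxfin hQfin⟩
    have hSb : ∀ n, ∑ T ∈ Finset.range n, d ^ T * A T V ≤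
        B + γ₀ * ∑ T ∈ Finset.range n, d ^ T * A T V := by
      intro n
      cases n with
      | zero => simp
      | succ n =>
        conv_lhs => rw [Finset.sum_range_succ']
        have h0 : d ^ 0 * A 0 V = V a := by simp [hA, ExA_zero]
        have h1 : ∑ k ∈ Finset.range n, d ^ (k + 1) * A (k + 1) V ≤
            γ₀ * ∑ k ∈ Finset.range n, d ^ k * A k V +
            Cx * ∑ k ∈ Finset.range n, d ^ k * KI k := by
          calc ∑ k ∈ Finset.range n, d ^ (k + 1) * A (k + 1) V
              ≤ ∑ k ∈ Finset.range n, (γ₀ * (d ^ k * A k V) + Cx * (d ^ k * KI k)) :=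
                Finset.sum_le_sum fun k _ => EVd k
            _ = _ := by rw [Finset.sum_add_distrib, Finset.mul_sum, Finset.mul_sum]
        have h2 : ∑ k ∈ Finset.range n, d ^ k * A k V ≤
            ∑ k ∈ Finset.range (n + 1), d ^ k * A k V :=
          Finset.sum_le_sum_of_subset (Finset.range_subset_range.mpr (Nat.le_succ n))
        have h3 : ∑ k ∈ Finset.range n, d ^ k * KI k ≤ Q := ENNReal.sum_le_tsum _
        calc ∑ k ∈ Finset.range n, d ^ (k + 1) * A (k + 1) V + d ^ 0 * A 0 V
            ≤ (γ₀ * ∑ k ∈ Finset.range n, d ^ k * A k V +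
                Cx * ∑ k ∈ Finset.range n, d ^ k * KI k) + V a := by
              rw [h0]
              exact add_le_add_left h1 _
          _ ≤ (γ₀ * ∑ k ∈ Finset.range (n + 1), d ^ k * A k V + Cx * Q) + V a :=
              add_le_add_left (add_le_add (mul_le_mul_right h2 _) (mul_le_mul_right h3 _)) _
          _ = B + γ₀ * ∑ k ∈ Finset.range (n + 1), d ^ k * A k V := by
              rw [hB]
              ring
    have hSfin : ∀ n, (∑ T ∈ Finset.range n, d ^ T * A T V) ≠ ⊤ := by
      intro n
      exact (ENNReal.sum_lt_top.mpr fun T _ => (hAVfin T).lt_top).ne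
    have hγ₀fin : γ₀ ≠ ⊤ := ne_top_of_lt (lt_of_lt_of_le hγ₀1 le_top)
    have hγ₀R : γ₀.toReal < 1 := by
      have := (ENNReal.toReal_lt_toReal hγ₀fin ENNReal.one_ne_top).mpr hγ₀1
      simpa using this
    have hSle : ∀ n, ∑ T ∈ Finset.range n, d ^ T * A T V ≤
        ENNReal.ofReal (B.toReal / (1 - γ₀.toReal)) := by
      intro n
      have h1 := hSb n
      have hrhs : B + γ₀ * ∑ T ∈ Finset.range n, d ^ T * A T V ≠ ⊤ :=
        ENNReal.add_ne_top.mpr ⟨hBfin, ENNReal.mul_ne_top hγ₀fin (hSfin n)⟩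
      have h2 := ENNReal.toReal_mono hrhs h1
      rw [ENNReal.toReal_add hBfin (ENNReal.mul_ne_top hγ₀fin (hSfin n)),
        ENNReal.toReal_mul] at h2
      have h3 : (∑ T ∈ Finset.range n, d ^ T * A T V).toReal ≤ B.toReal / (1 - γ₀.toReal) := by
        rw [le_div_iff₀ (by linarith)]
        nlinarith [ENNReal.toReal_nonneg (a := ∑ T ∈ Finset.range n, d ^ T * A T V)]
      calc ∑ T ∈ Finset.range n, d ^ T * A T V
          = ENNReal.ofReal ((∑ T ∈ Finset.range n, d ^ T * A T V).toReal) :=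
            (ENNReal.ofReal_toReal (hSfin n)).symm
        _ ≤ _ := ENNReal.ofReal_le_ofReal h3
    have hVsumfin : (∑' T, d ^ T * A T V) ≠ ⊤ := by
      rw [ENNReal.tsum_eq_iSup_nat]
      exact (lt_of_le_of_lt (iSup_le hSle) ENNReal.ofReal_lt_top).ne
    have htend : Filter.Tendsto (fun T => d ^ T * A T V) Filter.atTop (nhds 0) := by
      have h1 := ENNReal.summable_toReal hVsumfin
      have h2 := h1.tendsto_atTop_zero
      have h3 := ENNReal.tendsto_ofReal h2
      rw [ENNReal.ofReal_zero] at h3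
      exact h3.congr fun T => ENNReal.ofReal_toReal (hAVfin T)
    -- pass to the limit
    have hNZsum : ∀ T, ψ z * ∑ t ∈ Finset.range T, d ^ (t + 1) * NZ t ≤ ψ a := by
      intro T
      rw [Tψ T]
      exact le_add_self
    have hstepT : ∀ T, ψ z * W a ≤ ψ z * C₃ * (d ^ T * A T V) + W z * ψ a := by
      intro T
      have h2 : A T W ≤ C₃ * A T V := by
        calc A T W ≤ A T (fun j => C₃ * V j) := ExA_mono_g P c ζs a z hWbd T
          _ = C₃ * A T V := hAsmul C₃ V T
      calc ψ z * W a
          ≤ ψ z * (d ^ T * A T W + W z * ∑ t ∈ Finset.range T, d ^ (t + 1) * NZ t) :=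
            mul_le_mul_right (TW T) _
        _ = ψ z * (d ^ T * A T W) + W z * (ψ z * ∑ t ∈ Finset.range T, d ^ (t + 1) * NZ t) := by
            ring
        _ ≤ ψ z * (d ^ T * (C₃ * A T V)) + W z * ψ a :=
            add_le_add (mul_le_mul_right (mul_le_mul_right h2 _) _)
              (mul_le_mul_right (hNZsum T) _)
        _ = ψ z * C₃ * (d ^ T * A T V) + W z * ψ a := by ring
    have hlim : Filter.Tendsto (fun T => ψ z * C₃ * (d ^ T * A T V) + W z * ψ a)
        Filter.atTop (nhds (W z * ψ a)) := by
      have h1 := ENNReal.Tendsto.const_mul htend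
        (Or.inr (ENNReal.mul_ne_top (hψpos z).2 hC₃))
      rw [mul_zero] at h1
      have h2 := h1.add (tendsto_const_nhds (x := W z * ψ a) (f := Filter.atTop))
      rw [zero_add] at h2
      exact h2
    exact ge_of_tendsto' hlim hstepT
  -- the deficiency function and its supersolution property
  set Hf := fun s => W z * ψ s - ψ z * W s with hHf
  have hHadd : ∀ s, Hf s + ψ z * W s = W z * ψ s := fun s => tsub_add_cancel_of_le (hLOW s)
  have hHz : Hf z = 0 := by
    rw [hHf]
    dsimp only
    rw [tsub_eq_zero_iff_le, mul_comm]
  have hHsuper : ∀ s, ENNReal.ofReal (Real.exp (c s (vt s))) * ∑' j, Hf j * P s (vt s) j ≤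
      ENNReal.ofReal (Real.exp ρ) * Hf s := by
    intro s
    have hts : (∑' j, Hf j * P s (vt s) j) + ψ z * ∑' j, W j * P s (vt s) j
        = W z * ∑' j, ψ j * P s (vt s) j := by
      rw [← ENNReal.tsum_mul_left, ← ENNReal.tsum_mul_left, ← ENNReal.tsum_add]
      congr 1
      funext j
      calc Hf j * P s (vt s) j + ψ z * (W j * P s (vt s) j)
          = (Hf j + ψ z * W j) * P s (vt s) j := by ring
        _ = W z * (ψ j * P s (vt s) j) := by rw [hHadd j]; ring
    have hmain : ENNReal.ofReal (Real.exp (c s (vt s))) * ∑' j, Hf j * P s (vt s) j +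
        ENNReal.ofReal (Real.exp (c s (vt s))) * (ψ z * ∑' j, W j * P s (vt s) j)
        = ENNReal.ofReal (Real.exp ρ) * Hf s +
          ψ z * (ENNReal.ofReal (Real.exp ρ) * W s) := by
      rw [← mul_add, hts]
      calc ENNReal.ofReal (Real.exp (c s (vt s))) * (W z * ∑' j, ψ j * P s (vt s) j)
          = W z * (ENNReal.ofReal (Real.exp (c s (vt s))) * ∑' j, ψ j * P s (vt s) j) := by
            ring
        _ = W z * (ENNReal.ofReal (Real.exp ρ) * ψ s) := by rw [← hψex s]
        _ = ENNReal.ofReal (Real.exp ρ) * (W z * ψ s) := by ring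
        _ = ENNReal.ofReal (Real.exp ρ) * (Hf s + ψ z * W s) := by rw [hHadd s]
        _ = _ := by ring
    have hDleB : ψ z * (ENNReal.ofReal (Real.exp ρ) * W s) ≤
        ENNReal.ofReal (Real.exp (c s (vt s))) * (ψ z * ∑' j, W j * P s (vt s) j) := by
      calc ψ z * (ENNReal.ofReal (Real.exp ρ) * W s)
          ≤ ψ z * (ENNReal.ofReal (Real.exp (c s (vt s))) * ∑' j, W j * P s (vt s) j) :=
            mul_le_mul_right (hsup s (vt s) (hvtmem s)) _
        _ = _ := by ring
    have hBfin : ENNReal.ofReal (Real.exp (c s (vt s))) *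
        (ψ z * ∑' j, W j * P s (vt s) j) ≠ ⊤ := by
      apply ENNReal.mul_ne_top ENNReal.ofReal_ne_top
      apply ENNReal.mul_ne_top (hψpos z).2
      have h1 : ∑' j, W j * P s (vt s) j ≤ C₃ * ∑' j, V j * P s (vt s) j := by
        rw [← ENNReal.tsum_mul_left]
        exact ENNReal.tsum_le_tsum fun j =>
          le_of_le_of_eq (mul_le_mul_left (hWbd j) _) (mul_assoc _ _ _)
      have h2 : ∑' j, V j * P s (vt s) j ≤ V s + Cd := by
        calc ∑' j, V j * P s (vt s) j
            ≤ ENNReal.ofReal (Real.exp (c s (vt s))) * ∑' j, V j * P s (vt s) j := by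
              apply le_mul_of_one_le_left'
              rw [show (1:ℝ≥0∞) = ENNReal.ofReal (Real.exp 0) by simp]
              exact ENNReal.ofReal_le_ofReal (Real.exp_le_exp.mpr (hc s (vt s) (hvtmem s)))
          _ ≤ V s + Cd := hdr s (vt s) (hvtmem s)
      exact ne_top_of_le_ne_top
        (ENNReal.mul_ne_top hC₃ (ENNReal.add_ne_top.mpr ⟨hVfin s, hCd⟩))
        (h1.trans (mul_le_mul_right h2 _))
    have h4 : ENNReal.ofReal (Real.exp (c s (vt s))) * ∑' j, Hf j * P s (vt s) j +
        ENNReal.ofReal (Real.exp (c s (vt s))) * (ψ z * ∑' j, W j * P s (vt s) j) ≤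
        ENNReal.ofReal (Real.exp ρ) * Hf s +
        ENNReal.ofReal (Real.exp (c s (vt s))) * (ψ z * ∑' j, W j * P s (vt s) j) := by
      rw [hmain]
      exact add_le_add_right hDleB _
    exact (ENNReal.add_le_add_iff_right hBfin).mp h4
  -- iterate from `z` and kill `Hf` along all paths
  have hiter0 : ∀ T, Ex P c (smPolicy vt) z T Hf = 0 := by
    intro T
    have hiter : Ex P c (smPolicy vt) z T Hf ≤ (ENNReal.ofReal (Real.exp ρ)) ^ T * Hf z := by
      induction T with
      | zero => simp [Ex_zero]
      | succ T ih =>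
        have h1 : Ex P c (smPolicy vt) z (T + 1) Hf ≤
            Ex P c (smPolicy vt) z T (fun s => ENNReal.ofReal (Real.exp ρ) * Hf s) := by
          apply Ex_succ_le_pt
          intro y
          exact hHsuper (y (Fin.last T))
        rw [Ex_smul] at h1
        calc Ex P c (smPolicy vt) z (T + 1) Hf
            ≤ ENNReal.ofReal (Real.exp ρ) * Ex P c (smPolicy vt) z T Hf := h1
          _ ≤ ENNReal.ofReal (Real.exp ρ) * ((ENNReal.ofReal (Real.exp ρ)) ^ T * Hf z) :=
              mul_le_mul_right ih _
          _ = (ENNReal.ofReal (Real.exp ρ)) ^ (T + 1) * Hf z := by ring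
    rw [hHz, mul_zero] at hiter
    exact le_antisymm hiter (zero_le)
  have hHzero : ∀ j, Hf j = 0 := by
    intro j
    by_cases hjz : j = z
    · rw [hjz]
      exact hHz
    · obtain ⟨n, hn0, x, hx0, hxn, hxP⟩ := hirr vt hvtmem z j (fun h => hjz h.symm)
      have h0 := hiter0 n
      rw [Ex_apply] at h0
      have h1 := ENNReal.tsum_eq_zero.mp h0 (fun s : Fin (n + 1) => x s.val)
      set y : Fin (n + 1) → ℕ := fun s => x s.val with hy
      have hext : ∀ t, t ≤ n → extN n y t = x t := by
        intro t ht
        show y ⟨min t n, _⟩ = x t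
        rw [hy]
        dsimp only
        rw [Nat.min_eq_left ht]
      have hw : pathWeight P (smPolicy vt) z n (extN n y) ≠ 0 := by
        unfold pathWeight
        apply mul_ne_zero
        · rw [hext 0 (Nat.zero_le n), hx0]
          simp
        · rw [Finset.prod_ne_zero_iff]
          intro t ht
          have htn : t < n := Finset.mem_range.mp ht
          have hact : act (smPolicy vt) (extN n y) t = vt (extN n y t) := rfl
          rw [hact, hext t htn.le, hext (t + 1) htn]
          exact (hxP t htn).ne'
      have h3 : y (Fin.last n) = j := by
        rw [hy]
        dsimp only
        rw [Fin.val_last]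
        exact hxn
      rcases mul_eq_zero.mp h1 with h4 | h4
      · exfalso
        rcases mul_eq_zero.mp h4 with h5 | h5
        · exact hw h5
        · exact (ENNReal.ofReal_pos.mpr (Real.exp_pos _)).ne' h5
      · rw [h3] at h4
        exact h4
  refine ⟨W z / ψ z, ?_, ?_, ?_⟩
  · exact ENNReal.div_pos (hWpos z).1.ne' (hψpos z).2
  · exact (ENNReal.div_lt_top (hWpos z).2 (hψpos z).1.ne').ne
  · intro s
    have hle : W z * ψ s ≤ ψ z * W s := by
      have h1 := hHzero s
      rw [hHf] at h1
      dsimp only at h1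
      exact tsub_eq_zero_iff_le.mp h1
    have heq : ψ z * W s = W z * ψ s := le_antisymm (hLOW s) hle
    calc W s = 1 * W s := (one_mul _).symm
      _ = (ψ z)⁻¹ * ψ z * W s := by
          rw [ENNReal.inv_mul_cancel (hψpos z).1.ne' (hψpos z).2]
      _ = (ψ z)⁻¹ * (ψ z * W s) := by ring
      _ = (ψ z)⁻¹ * (W z * ψ s) := by rw [heq]
      _ = W z / ψ z * ψ s := by
          rw [ENNReal.div_eq_inv_mul]
          ring

end RSDT
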